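/- arXiv:1606.03212 — 9 statements merged into one kernel-verified Lean document; each statement's English description precedes it below -/
import Mathlib

section
/- Let a_1, ..., a_d be orthonormal vectors in R^d and T = Σᵢ aᵢ^⊗4 the corresponding orthogonal 4th-order tensor. For unit vectors u_1, ..., u_d in R^d, the objective Σ_{i≠j} T(uᵢ, uᵢ, uⱼ, uⱼ) is nonnegative, and it equals 0 if and only if there is a permutation π and signs κᵢ ∈ {±1} such that uᵢ = κᵢ a_{π(i)} for all i. -/
open scoped RealInnerProductSpace

/-- For the orthogonal 4th order tensor T = Σᵢ aᵢ^⊗4 and unit vectors u₁,...,u_d,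
the objective Σ_{i≠j} T(uᵢ,uᵢ,uⱼ,uⱼ) is nonnegative, and vanishes iff the uᵢ are
signed permutations of the aᵢ. -/
theorem stmt1 {d : ℕ} (a u : Fin d → EuclideanSpace ℝ (Fin d))
    (ha : Orthonormal ℝ a) (hu : ∀ i, ‖u i‖ = 1) :
    0 ≤ (∑ i : Fin d, ∑ j : Fin d, if i ≠ j then
        (∑ k : Fin d, ⟪a k, u i⟫ * ⟪a k, u i⟫ * ⟪a k, u j⟫ * ⟪a k, u j⟫) else 0) ∧
    ((∑ i : Fin d, ∑ j : Fin d, if i ≠ j then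
        (∑ k : Fin d, ⟪a k, u i⟫ * ⟪a k, u i⟫ * ⟪a k, u j⟫ * ⟪a k, u j⟫) else 0) = 0 ↔
      ∃ (π : Equiv.Perm (Fin d)) (κ : Fin d → ℝ),
        (∀ i, κ i = 1 ∨ κ i = -1) ∧ ∀ i, u i = κ i • a (π i)) := by
  have hterm : ∀ (i j k : Fin d),
      0 ≤ ⟪a k, u i⟫ * ⟪a k, u i⟫ * ⟪a k, u j⟫ * ⟪a k, u j⟫ := by
    intro i j k
    have : ⟪a k, u i⟫ * ⟪a k, u i⟫ * ⟪a k, u j⟫ * ⟪a k, u j⟫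
        = (⟪a k, u i⟫ * ⟪a k, u j⟫) ^ 2 := by ring
    rw [this]; exact sq_nonneg _
  have hnn : ∀ i j : Fin d, 0 ≤ (if i ≠ j then
      (∑ k : Fin d, ⟪a k, u i⟫ * ⟪a k, u i⟫ * ⟪a k, u j⟫ * ⟪a k, u j⟫) else 0) := by
    intro i j
    split
    · exact Finset.sum_nonneg fun k _ => hterm i j k
    · exact le_refl 0
  refine ⟨Finset.sum_nonneg fun i _ => Finset.sum_nonneg fun j _ => hnn i j, ?_, ?_⟩
  · intro h
    rcases Nat.eq_zero_or_pos d with hd | hd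
    · subst hd
      exact ⟨Equiv.refl _, fun i => 1, fun i => i.elim0, fun i => i.elim0⟩
    haveI : Nonempty (Fin d) := ⟨⟨0, hd⟩⟩
    -- from h = 0, every cross term vanishes
    have h1 := (Finset.sum_eq_zero_iff_of_nonneg
      (fun i _ => Finset.sum_nonneg fun j _ => hnn i j)).mp h
    have hdisj : ∀ i j : Fin d, i ≠ j → ∀ k, ⟪a k, u i⟫ = 0 ∨ ⟪a k, u j⟫ = 0 := by
      intro i j hij k
      have h2 := (Finset.sum_eq_zero_iff_of_nonneg
        (fun j _ => hnn i j)).mp (h1 i (Finset.mem_univ i)) j (Finset.mem_univ j)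
      rw [if_pos hij] at h2
      have h3 := (Finset.sum_eq_zero_iff_of_nonneg
        (fun k _ => hterm i j k)).mp h2 k (Finset.mem_univ k)
      have h4 : (⟪a k, u i⟫ * ⟪a k, u j⟫) ^ 2 = 0 := by rw [← h3]; ring
      exact mul_eq_zero.mp (pow_eq_zero_iff two_ne_zero |>.mp h4)
    -- a is an orthonormal basis
    have hcard : Fintype.card (Fin d) = Module.finrank ℝ (EuclideanSpace ℝ (Fin d)) := by
      simp [finrank_euclideanSpace]
    set bB := basisOfOrthonormalOfCardEqFinrank ha hcard with hbB
    have hco : ⇑bB = a := coe_basisOfOrthonormalOfCardEqFinrank ha hcard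
    set b := bB.toOrthonormalBasis (by rw [hco]; exact ha) with hbdef
    have hb : ∀ k, b k = a k := by
      intro k
      rw [hbdef, Module.Basis.coe_toOrthonormalBasis, hco]
    have hpar : ∀ i, ∑ k : Fin d, ⟪a k, u i⟫ * ⟪a k, u i⟫ = 1 := by
      intro i
      have := b.sum_inner_mul_inner (u i) (u i)
      have hnorm : ⟪u i, u i⟫ = 1 := by
        rw [real_inner_self_eq_norm_mul_norm, hu i]; ring
      rw [hnorm] at this
      calc ∑ k : Fin d, ⟪a k, u i⟫ * ⟪a k, u i⟫
          = ∑ k : Fin d, ⟪u i, b k⟫ * ⟪b k, u i⟫ := by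
            refine Finset.sum_congr rfl fun k _ => ?_
            rw [hb k, real_inner_comm (u i) (a k)]
        _ = 1 := this
    have hex : ∀ i, ∃ k, ⟪a k, u i⟫ ≠ 0 := by
      intro i
      by_contra hc
      push_neg at hc
      have : (1:ℝ) = 0 := by
        rw [← hpar i]
        exact Finset.sum_eq_zero fun k _ => by rw [hc k]; ring
      norm_num at this
    choose f hf using hex
    have hinj : Function.Injective f := by
      intro i j hij
      by_contra hne
      rcases hdisj i j hne (f i) with h' | h'
      · exact hf i h'
      · rw [hij] at h'; exact hf j h'
    have hbij : Function.Bijective f := Finite.injective_iff_bijective.mp hinj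
    have hsurj := hbij.2
    have hzero : ∀ i k, k ≠ f i → ⟪a k, u i⟫ = 0 := by
      intro i k hk
      obtain ⟨j, hj⟩ := hsurj k
      have hji : j ≠ i := by rintro rfl; exact hk hj.symm
      rcases hdisj j i hji k with h' | h'
      · exact absurd h' (hj ▸ hf j)
      · exact h'
    have hκ2 : ∀ i, ⟪a (f i), u i⟫ * ⟪a (f i), u i⟫ = 1 := by
      intro i
      rw [← hpar i]
      symm
      refine Finset.sum_eq_single_of_mem (f i) (Finset.mem_univ _) fun k _ hk => ?_
      rw [hzero i k hk]; ring
    have hrepr : ∀ i, u i = ⟪a (f i), u i⟫ • a (f i) := by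
      intro i
      have hr := b.sum_repr (u i)
      have : ∑ k : Fin d, b.repr (u i) k • b k
          = ⟪a (f i), u i⟫ • a (f i) := by
        rw [Finset.sum_eq_single_of_mem (f i) (Finset.mem_univ _)
          (fun k _ hk => by
            rw [b.repr_apply_apply, hb k, hzero i k hk, zero_smul])]
        rw [b.repr_apply_apply, hb (f i)]
      exact hr.symm.trans this
    exact ⟨Equiv.ofBijective f hbij, fun i => ⟪a (f i), u i⟫,
      fun i => mul_self_eq_one_iff.mp (hκ2 i),
      fun i => by rw [Equiv.ofBijective_apply]; exact hrepr i⟩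
  · rintro ⟨π, κ, hκ, huv⟩
    refine Finset.sum_eq_zero fun i _ => Finset.sum_eq_zero fun j _ => ?_
    split
    · rename_i hij
      have hij' : π i ≠ π j := fun e => hij (π.injective e)
      have hite := orthonormal_iff_ite.mp ha
      refine Finset.sum_eq_zero fun k _ => ?_
      rcases ne_or_eq k (π i) with hk | hk
      · have : ⟪a k, u i⟫ = 0 := by
          rw [huv i, real_inner_smul_right, hite k (π i), if_neg hk, mul_zero]
        rw [this]; ring
      · have hk2 : k ≠ π j := by rw [hk]; exact hij'
        have : ⟪a k, u j⟫ = 0 := by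
          rw [huv j, real_inner_smul_right, hite k (π j), if_neg hk2, mul_zero]
        rw [this]; ring
    · rfl
end

section
/- Let x be a random vector uniformly distributed on {±1}^d and A a d×d orthonormal matrix (AAᵀ = I) with columns a_1, ..., a_d, and set y = Ax. Define the 4th order tensor Z by Z(i,i,i,i) = 3 for all i, Z(i,i,j,j) = Z(i,j,i,j) = Z(i,j,j,i) = 1 for all i ≠ j, and all other entries 0. Then E[(Z - y^⊗4)/2] = Σᵢ aᵢ^⊗4. -/
/-- The Rademacher sign vector corresponding to `s : Fin d → Bool`. -/
noncomputable def radSign {d : ℕ} (s : Fin d → Bool) (i : Fin d) : ℝ :=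
  if s i then 1 else -1

/-- The auxiliary 4th order tensor Z: Z(i,i,i,i)=3, Z(i,i,j,j)=Z(i,j,i,j)=Z(i,j,j,i)=1
for i ≠ j, and all other entries 0. -/
noncomputable def Ztensor {d : ℕ} (i₁ i₂ i₃ i₄ : Fin d) : ℝ :=
  if i₁ = i₂ ∧ i₂ = i₃ ∧ i₃ = i₄ then 3
  else if (i₁ = i₂ ∧ i₃ = i₄) ∨ (i₁ = i₃ ∧ i₂ = i₄) ∨ (i₁ = i₄ ∧ i₂ = i₃) then 1
  else 0

set_option linter.unnecessarySeqFocus false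

lemma master {d : ℕ} (m : Fin d → ℕ) :
    ∑ s : Fin d → Bool, ∏ i, (radSign s i) ^ (m i)
      = if ∀ i, Even (m i) then (2:ℝ)^d else 0 := by
  have h : ∑ s : Fin d → Bool, ∏ i, (radSign s i) ^ (m i)
      = ∏ i, ∑ b : Bool, (if b then (1:ℝ) else -1) ^ (m i) := by
    rw [Fintype.prod_sum (fun i (b : Bool) => (if b then (1:ℝ) else -1) ^ (m i))]
    rfl
  rw [h]
  have hb : ∀ i : Fin d, (∑ b : Bool, (if b then (1:ℝ) else -1) ^ (m i))
      = if Even (m i) then 2 else 0 := by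
    intro i
    rw [Fintype.sum_bool]
    rcases Nat.even_or_odd (m i) with he | ho
    · simp [he, he.neg_one_pow]; norm_num
    · simp [ho, ho.neg_one_pow, Nat.not_even_iff_odd.mpr ho]
  rw [Finset.prod_congr rfl (fun i _ => hb i)]
  by_cases h : ∀ i, Even (m i)
  · simp [h, Finset.prod_const]
  · rw [if_neg h]
    push_neg at h
    obtain ⟨i, hi⟩ := h
    exact Finset.prod_eq_zero (Finset.mem_univ i) (by simp [hi])

lemma rad_eq_prod {d : ℕ} (s : Fin d → Bool) (k : Fin d) :
    radSign s k = ∏ i, (radSign s i) ^ (if i = k then 1 else 0) := by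
  rw [Finset.prod_eq_single k (fun i _ hik => by simp [hik])
    (fun h => absurd (Finset.mem_univ k) h)]
  simp

lemma quad {d : ℕ} (s : Fin d → Bool) (k1 k2 k3 k4 : Fin d) :
    radSign s k1 * radSign s k2 * radSign s k3 * radSign s k4
      = ∏ i, (radSign s i) ^
        ((if i = k1 then 1 else 0) + (if i = k2 then 1 else 0)
          + (if i = k3 then 1 else 0) + (if i = k4 then 1 else 0)) := by
  rw [rad_eq_prod s k1, rad_eq_prod s k2, rad_eq_prod s k3, rad_eq_prod s k4,
    ← Finset.prod_mul_distrib, ← Finset.prod_mul_distrib, ← Finset.prod_mul_distrib]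
  exact Finset.prod_congr rfl fun i _ => by rw [pow_add, pow_add, pow_add]

lemma even_iff {d : ℕ} (k1 k2 k3 k4 : Fin d) :
    (∀ i : Fin d, Even ((if i = k1 then 1 else 0) + (if i = k2 then 1 else 0)
          + (if i = k3 then 1 else 0) + (if i = k4 then 1 else 0)))
      ↔ ((k1 = k2 ∧ k3 = k4) ∨ (k1 = k3 ∧ k2 = k4) ∨ (k1 = k4 ∧ k2 = k3)) := by
  constructor
  · intro h
    have hone : k1 = k2 ∨ k1 = k3 ∨ k1 = k4 := by
      by_contra hc
      push_neg at hc
      obtain ⟨a, b, c⟩ := hc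
      have hh := h k1
      simp [a, b, c, Nat.even_iff] at hh
    rcases hone with h12 | h13 | h14
    · refine Or.inl ⟨h12, ?_⟩
      subst h12
      by_cases h34 : k3 = k4
      · exact h34
      · exfalso
        have hh := h k3
        by_cases h31 : k3 = k1 <;> simp [h31, h34, Nat.even_iff] at hh <;>
          split_ifs at hh <;> first | omega | (subst_vars; simp_all)
    · refine Or.inr (Or.inl ⟨h13, ?_⟩)
      subst h13
      by_cases h24 : k2 = k4
      · exact h24
      · exfalso
        have hh := h k2
        by_cases h21 : k2 = k1 <;> simp [h21, h24, Nat.even_iff] at hh <;>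
          split_ifs at hh <;> first | omega | (subst_vars; simp_all)
    · refine Or.inr (Or.inr ⟨h14, ?_⟩)
      subst h14
      by_cases h23 : k2 = k3
      · exact h23
      · exfalso
        have hh := h k2
        by_cases h21 : k2 = k1 <;> simp [h21, h23, Nat.even_iff] at hh <;>
          split_ifs at hh <;> first | omega | (subst_vars; simp_all)
  · rintro (⟨h1, h2⟩ | ⟨h1, h2⟩ | ⟨h1, h2⟩) i <;>
      simp only [← h1, ← h2] <;> rw [Nat.even_iff] <;> split_ifs <;> omega

lemma key {d : ℕ} (k1 k2 k3 k4 : Fin d) :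
    ∑ s : Fin d → Bool, radSign s k1 * radSign s k2 * radSign s k3 * radSign s k4
      = if (k1 = k2 ∧ k3 = k4) ∨ (k1 = k3 ∧ k2 = k4) ∨ (k1 = k4 ∧ k2 = k3)
        then (2:ℝ)^d else 0 := by
  classical
  rw [Finset.sum_congr rfl (fun s _ => quad s k1 k2 k3 k4), master]
  simp [even_iff]

lemma split_ite {d : ℕ} (k1 k2 k3 k4 : Fin d) :
    (if (k1 = k2 ∧ k3 = k4) ∨ (k1 = k3 ∧ k2 = k4) ∨ (k1 = k4 ∧ k2 = k3)
      then (2:ℝ)^d else 0)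
    = 2^d * ((if k1 = k2 then (1:ℝ) else 0) * (if k3 = k4 then (1:ℝ) else 0)
        + (if k1 = k3 then (1:ℝ) else 0) * (if k2 = k4 then (1:ℝ) else 0)
        + (if k1 = k4 then (1:ℝ) else 0) * (if k2 = k3 then (1:ℝ) else 0)
        - 2 * ((if k1 = k2 then (1:ℝ) else 0) * (if k1 = k3 then (1:ℝ) else 0)
            * (if k1 = k4 then (1:ℝ) else 0))) := by
  split_ifs <;> first | ring1 | tauto | (subst_vars; simp_all)

lemma QA {d : ℕ} (f1 f2 f3 f4 : Fin d → ℝ) :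
    ∑ k1 : Fin d, ∑ k2 : Fin d, ∑ k3 : Fin d, ∑ k4 : Fin d,
      (f1 k1 * f2 k2 * (if k1 = k2 then (1:ℝ) else 0))
        * (f3 k3 * f4 k4 * (if k3 = k4 then (1:ℝ) else 0))
    = (∑ k : Fin d, f1 k * f2 k) * (∑ k : Fin d, f3 k * f4 k) := by
  simp [mul_ite, ite_mul, mul_zero, zero_mul, mul_one, one_mul,
    Finset.sum_ite_eq, Finset.sum_mul, Finset.mul_sum]
  rw [Finset.sum_comm]

lemma QB {d : ℕ} (f1 f2 f3 f4 : Fin d → ℝ) :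
    ∑ k1 : Fin d, ∑ k2 : Fin d, ∑ k3 : Fin d, ∑ k4 : Fin d,
      (f1 k1 * f3 k3 * (if k1 = k3 then (1:ℝ) else 0))
        * (f2 k2 * f4 k4 * (if k2 = k4 then (1:ℝ) else 0))
    = (∑ k : Fin d, f1 k * f3 k) * (∑ k : Fin d, f2 k * f4 k) := by
  simp [mul_ite, ite_mul, mul_zero, zero_mul, mul_one, one_mul,
    Finset.sum_ite_eq, Finset.sum_mul, Finset.mul_sum]
  rw [Finset.sum_comm]

lemma QC {d : ℕ} (f1 f2 f3 f4 : Fin d → ℝ) :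
    ∑ k1 : Fin d, ∑ k2 : Fin d, ∑ k3 : Fin d, ∑ k4 : Fin d,
      (f1 k1 * f4 k4 * (if k1 = k4 then (1:ℝ) else 0))
        * (f2 k2 * f3 k3 * (if k2 = k3 then (1:ℝ) else 0))
    = (∑ k : Fin d, f1 k * f4 k) * (∑ k : Fin d, f2 k * f3 k) := by
  simp [mul_ite, ite_mul, mul_zero, zero_mul, mul_one, one_mul,
    Finset.sum_ite_eq, Finset.sum_mul, Finset.mul_sum]
  rw [Finset.sum_comm]

lemma QD {d : ℕ} (f1 f2 f3 f4 : Fin d → ℝ) :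
    ∑ k1 : Fin d, ∑ k2 : Fin d, ∑ k3 : Fin d, ∑ k4 : Fin d,
      (f1 k1 * f2 k2 * f3 k3 * f4 k4)
        * ((if k1 = k2 then (1:ℝ) else 0) * (if k1 = k3 then (1:ℝ) else 0)
            * (if k1 = k4 then (1:ℝ) else 0))
    = ∑ k : Fin d, f1 k * f2 k * f3 k * f4 k := by
  simp [mul_ite, ite_mul, mul_zero, zero_mul, mul_one, one_mul,
    Finset.sum_ite_eq, Finset.sum_mul, Finset.mul_sum]

set_option maxHeartbeats 3000000 in
lemma Ztensor_eq {d : ℕ} (i₁ i₂ i₃ i₄ : Fin d) :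
    Ztensor i₁ i₂ i₃ i₄
      = (if i₁ = i₂ then (1:ℝ) else 0) * (if i₃ = i₄ then (1:ℝ) else 0)
        + (if i₁ = i₃ then (1:ℝ) else 0) * (if i₂ = i₄ then (1:ℝ) else 0)
        + (if i₁ = i₄ then (1:ℝ) else 0) * (if i₂ = i₃ then (1:ℝ) else 0) := by
  unfold Ztensor
  split_ifs <;> first | ring1 | tauto | (subst_vars; simp_all) | norm_num

/-- For x uniform on {±1}^d and y = Ax with A orthonormal (columns aᵢ),
E[(Z - y^⊗4)/2] = Σᵢ aᵢ^⊗4 (entrywise). -/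
theorem stmt3 {d : ℕ} (A : Matrix (Fin d) (Fin d) ℝ)
    (hA : A * A.transpose = 1)
    (y : (Fin d → Bool) → Fin d → ℝ)
    (hy : ∀ s i, y s i = ∑ k : Fin d, A i k * radSign s k) :
    ∀ i₁ i₂ i₃ i₄ : Fin d,
      (Ztensor i₁ i₂ i₃ i₄
        - (1 / 2 ^ d) * ∑ s : Fin d → Bool, y s i₁ * y s i₂ * y s i₃ * y s i₄) / 2
      = ∑ i : Fin d, A i₁ i * A i₂ i * A i₃ i * A i₄ i := by
  intro i₁ i₂ i₃ i₄
  classical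
  have hAo : ∀ i j : Fin d, (∑ k : Fin d, A i k * A j k) = if i = j then (1:ℝ) else 0 := by
    intro i j
    have h := congrFun (congrFun hA i) j
    simpa [Matrix.mul_apply, Matrix.transpose_apply, Matrix.one_apply] using h
  have expand : ∀ s : Fin d → Bool, y s i₁ * y s i₂ * y s i₃ * y s i₄
      = ∑ k1 : Fin d, ∑ k2 : Fin d, ∑ k3 : Fin d, ∑ k4 : Fin d,
          (A i₁ k1 * A i₂ k2 * A i₃ k3 * A i₄ k4)
            * (radSign s k1 * radSign s k2 * radSign s k3 * radSign s k4) := by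
    intro s
    rw [hy s i₁, Finset.sum_mul, Finset.sum_mul, Finset.sum_mul]
    refine Finset.sum_congr rfl fun k1 _ => ?_
    rw [hy s i₂, Finset.mul_sum, Finset.sum_mul, Finset.sum_mul]
    refine Finset.sum_congr rfl fun k2 _ => ?_
    rw [hy s i₃, Finset.mul_sum, Finset.sum_mul]
    refine Finset.sum_congr rfl fun k3 _ => ?_
    rw [hy s i₄, Finset.mul_sum]
    exact Finset.sum_congr rfl fun k4 _ => by ring
  have swap : ∑ s : Fin d → Bool, y s i₁ * y s i₂ * y s i₃ * y s i₄
      = ∑ k1 : Fin d, ∑ k2 : Fin d, ∑ k3 : Fin d, ∑ k4 : Fin d,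
          (A i₁ k1 * A i₂ k2 * A i₃ k3 * A i₄ k4)
            * ∑ s : Fin d → Bool,
              radSign s k1 * radSign s k2 * radSign s k3 * radSign s k4 := by
    rw [Finset.sum_congr rfl fun s _ => expand s]
    rw [Finset.sum_comm]
    refine Finset.sum_congr rfl fun k1 _ => ?_
    rw [Finset.sum_comm]
    refine Finset.sum_congr rfl fun k2 _ => ?_
    rw [Finset.sum_comm]
    refine Finset.sum_congr rfl fun k3 _ => ?_
    rw [Finset.sum_comm]
    exact Finset.sum_congr rfl fun k4 _ => (Finset.mul_sum _ _ _).symm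
  have point : ∀ k1 k2 k3 k4 : Fin d,
      (A i₁ k1 * A i₂ k2 * A i₃ k3 * A i₄ k4)
        * (∑ s : Fin d → Bool,
            radSign s k1 * radSign s k2 * radSign s k3 * radSign s k4)
      = 2^d * ((A i₁ k1 * A i₂ k2 * (if k1 = k2 then (1:ℝ) else 0))
            * (A i₃ k3 * A i₄ k4 * (if k3 = k4 then (1:ℝ) else 0))
          + (A i₁ k1 * A i₃ k3 * (if k1 = k3 then (1:ℝ) else 0))
            * (A i₂ k2 * A i₄ k4 * (if k2 = k4 then (1:ℝ) else 0))
          + (A i₁ k1 * A i₄ k4 * (if k1 = k4 then (1:ℝ) else 0))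
            * (A i₂ k2 * A i₃ k3 * (if k2 = k3 then (1:ℝ) else 0))
          - 2 * ((A i₁ k1 * A i₂ k2 * A i₃ k3 * A i₄ k4)
            * ((if k1 = k2 then (1:ℝ) else 0) * (if k1 = k3 then (1:ℝ) else 0)
                * (if k1 = k4 then (1:ℝ) else 0)))) :=
    fun k1 k2 k3 k4 => by rw [key, split_ite]; ring
  have step : ∑ s : Fin d → Bool, y s i₁ * y s i₂ * y s i₃ * y s i₄
      = 2^d * ((if i₁ = i₂ then (1:ℝ) else 0) * (if i₃ = i₄ then (1:ℝ) else 0)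
          + (if i₁ = i₃ then (1:ℝ) else 0) * (if i₂ = i₄ then (1:ℝ) else 0)
          + (if i₁ = i₄ then (1:ℝ) else 0) * (if i₂ = i₃ then (1:ℝ) else 0)
          - 2 * ∑ i : Fin d, A i₁ i * A i₂ i * A i₃ i * A i₄ i) := by
    rw [swap]
    rw [Finset.sum_congr rfl fun k1 _ => Finset.sum_congr rfl fun k2 _ =>
      Finset.sum_congr rfl fun k3 _ => Finset.sum_congr rfl fun k4 _ =>
        point k1 k2 k3 k4]
    rw [← hAo i₁ i₂, ← hAo i₃ i₄, ← hAo i₁ i₃, ← hAo i₂ i₄, ← hAo i₁ i₄, ← hAo i₂ i₃,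
      ← QA (A i₁) (A i₂) (A i₃) (A i₄), ← QB (A i₁) (A i₂) (A i₃) (A i₄),
      ← QC (A i₁) (A i₂) (A i₃) (A i₄), ← QD (A i₁) (A i₂) (A i₃) (A i₄)]
    simp only [Finset.mul_sum, Finset.sum_add_distrib, Finset.sum_sub_distrib, mul_add, mul_sub]
    try refine Finset.sum_congr rfl fun k1 _ => ?_
    try refine Finset.sum_congr rfl fun k2 _ => ?_
    try refine Finset.sum_congr rfl fun k3 _ => ?_
    try refine Finset.sum_congr rfl fun k4 _ => ?_
    try ring
  rw [step, Ztensor_eq]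
  have h2 : ((2:ℝ))^d ≠ 0 := by positivity
  field_simp
  try ring
end

section
/- Let the constraints c_i : R^d → R, i = 1..m, be β_i-smooth (‖∇c_i(w₁) - ∇c_i(w₂)‖ ≤ β_i‖w₁-w₂‖) and suppose the matrix C(w) = (∇c₁(w),...,∇c_m(w)) has minimum singular value at least α_c > 0 at every feasible point. Set 1/R² = Σᵢ βᵢ²/α_c². Then for any two feasible points w, w₀ (i.e., cᵢ(w) = cᵢ(w₀) = 0 for all i), the projection of w - w₀ onto the normal space at w₀ satisfies ‖P_{T₀ᶜ}(w - w₀)‖ ≤ ‖w - w₀‖²/(2R). -/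
open scoped RealInnerProductSpace

open InnerProductSpace in
lemma taylor_key {dd : ℕ} (f : EuclideanSpace ℝ (Fin dd) → ℝ)
    (g : EuclideanSpace ℝ (Fin dd) → EuclideanSpace ℝ (Fin dd))
    (hg : ∀ x, HasGradientAt f (g x) x) (β : ℝ)
    (hs : ∀ x y, ‖g x - g y‖ ≤ β * ‖x - y‖)
    (a b : EuclideanSpace ℝ (Fin dd)) (ha : f a = 0) (hb : f b = 0) :
    |⟪g a, b - a⟫| ≤ β / 2 * ‖b - a‖ ^ 2 := by
  set v := b - a with hv
  have hgcont : Continuous g := by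
    have : LipschitzWith (Real.toNNReal |β|) g := by
      apply LipschitzWith.of_dist_le_mul
      intro x y
      rw [dist_eq_norm, dist_eq_norm, Real.coe_toNNReal _ (abs_nonneg β)]
      exact (hs x y).trans (mul_le_mul_of_nonneg_right (le_abs_self β) (norm_nonneg _))
    exact this.continuous
  have hline : ∀ t : ℝ, HasDerivAt (fun t : ℝ => a + t • v) v t := by
    intro t
    simpa using ((hasDerivAt_id t).smul_const v).const_add a
  have hφ : ∀ t : ℝ, HasDerivAt (fun t : ℝ => f (a + t • v)) ⟪g (a + t • v), v⟫ t := by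
    intro t
    have h1 := (hasGradientAt_iff_hasFDerivAt.mp (hg (a + t • v))).comp_hasDerivAt t (hline t)
    simp [toDual_apply_apply] at h1; exact h1
  have hcont : Continuous fun t : ℝ => ⟪g (a + t • v), v⟫ := by
    exact (Continuous.inner (hgcont.comp (by continuity)) continuous_const)
  have hint : IntervalIntegrable (fun t : ℝ => ⟪g (a + t • v), v⟫) MeasureTheory.volume 0 1 :=
    hcont.intervalIntegrable 0 1
  have hFTC : (∫ t in (0:ℝ)..1, ⟪g (a + t • v), v⟫) = f (a + (1:ℝ) • v) - f (a + (0:ℝ) • v) :=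
    intervalIntegral.integral_eq_sub_of_hasDerivAt (fun t _ => hφ t) hint
  have hzero : (∫ t in (0:ℝ)..1, ⟪g (a + t • v), v⟫) = 0 := by
    rw [hFTC]
    simp [hv, ha, hb]
  have heq : ⟪g a, v⟫ = ∫ t in (0:ℝ)..1, ⟪g a - g (a + t • v), v⟫ := by
    have : (∫ t in (0:ℝ)..1, ⟪g a - g (a + t • v), v⟫)
        = (∫ t in (0:ℝ)..1, (⟪g a, v⟫ - ⟪g (a + t • v), v⟫)) := by
      congr 1; funext t; rw [inner_sub_left]
    rw [this, intervalIntegral.integral_sub (intervalIntegrable_const) hint, hzero]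
    simp
  rw [heq]
  have hbound : ∀ t ∈ Set.Icc (0:ℝ) 1, |⟪g a - g (a + t • v), v⟫| ≤ β * ‖v‖ ^ 2 * t := by
    intro t ht
    calc |⟪g a - g (a + t • v), v⟫| ≤ ‖g a - g (a + t • v)‖ * ‖v‖ := abs_real_inner_le_norm _ _
      _ ≤ (β * ‖a - (a + t • v)‖) * ‖v‖ := by
          exact mul_le_mul_of_nonneg_right (hs a (a + t • v)) (norm_nonneg _)
      _ = β * ‖v‖ ^ 2 * t := by
          have : ‖a - (a + t • v)‖ = t * ‖v‖ := by
            rw [show a - (a + t • v) = -(t • v) by abel, norm_neg, norm_smul,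
              Real.norm_eq_abs, abs_of_nonneg ht.1]
          rw [this]; ring
  calc |∫ t in (0:ℝ)..1, ⟪g a - g (a + t • v), v⟫|
      ≤ |∫ t in (0:ℝ)..1, β * ‖v‖ ^ 2 * t| := by
        rw [← Real.norm_eq_abs, ← Real.norm_eq_abs]
        apply intervalIntegral.norm_integral_le_abs_of_norm_le
        · filter_upwards [MeasureTheory.ae_restrict_mem measurableSet_uIoc] with t ht
          rw [Set.uIoc_of_le (by norm_num : (0:ℝ) ≤ 1)] at ht
          rw [Real.norm_eq_abs]
          exact hbound t ⟨ht.1.le, ht.2⟩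
        · exact (Continuous.intervalIntegrable (by continuity) 0 1)
    _ = |β / 2 * ‖v‖ ^ 2| := by
        rw [intervalIntegral.integral_const_mul, integral_id]
        congr 1; ring
    _ ≤ β / 2 * ‖v‖ ^ 2 := by
        have hnn : 0 ≤ β * ‖v‖ ^ 2 :=
          (abs_nonneg _).trans (by simpa using hbound 1 ⟨zero_le_one, le_refl 1⟩)
        rw [abs_of_nonneg (by linarith)]

/-- For βᵢ-smooth constraints with σ_min(C(w)) ≥ α_c on the feasible set and
1/R² = Σᵢ βᵢ²/α_c², the projection of w - w₀ (w, w₀ feasible) onto the normal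
space at w₀ is at most ‖w - w₀‖²/(2R). -/
theorem stmt7 {d m : ℕ}
    (c : Fin m → EuclideanSpace ℝ (Fin d) → ℝ)
    (gc : Fin m → EuclideanSpace ℝ (Fin d) → EuclideanSpace ℝ (Fin d))
    (hgc : ∀ i x, HasGradientAt (c i) (gc i x) x)
    (β : Fin m → ℝ)
    (hsmooth : ∀ i x y, ‖gc i x - gc i y‖ ≤ β i * ‖x - y‖)
    (αc : ℝ) (hαc : 0 < αc)
    (hsv : ∀ w : EuclideanSpace ℝ (Fin d), (∀ i, c i w = 0) → ∀ t : Fin m → ℝ,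
      αc * Real.sqrt (∑ i : Fin m, t i ^ 2) ≤ ‖∑ i : Fin m, t i • gc i w‖)
    (R : ℝ) (hR : 0 < R) (hRdef : 1 / R ^ 2 = ∑ i : Fin m, β i ^ 2 / αc ^ 2)
    (w w₀ : EuclideanSpace ℝ (Fin d))
    (hw : ∀ i, c i w = 0) (hw₀ : ∀ i, c i w₀ = 0) :
    ‖(Submodule.orthogonalProjection (Submodule.span ℝ (Set.range fun i => gc i w₀)) (w - w₀) :
        EuclideanSpace ℝ (Fin d))‖ ≤ ‖w - w₀‖ ^ 2 / (2 * R) := by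
  set N := Submodule.span ℝ (Set.range fun i => gc i w₀) with hN
  set v : EuclideanSpace ℝ (Fin d) := w - w₀ with hv
  set P : EuclideanSpace ℝ (Fin d) := (Submodule.orthogonalProjection N v : EuclideanSpace ℝ (Fin d))
    with hP
  obtain ⟨t, ht⟩ : ∃ t : Fin m → ℝ, ∑ i, t i • gc i w₀ = P :=
    (Submodule.mem_span_range_iff_exists_fun ℝ).mp (Submodule.orthogonalProjection N v).2
  have hperp : ⟪P, v - P⟫ = 0 :=
    (Submodule.mem_orthogonal N _).mp (Submodule.sub_starProjection_mem_orthogonal (K := N) v)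
      P (Submodule.orthogonalProjection N v).2
  have hPv : ⟪P, v⟫ = ‖P‖ ^ 2 := by
    have : ⟪P, v⟫ - ⟪P, P⟫ = 0 := by rw [← inner_sub_right]; exact hperp
    rw [← real_inner_self_eq_norm_sq]; linarith
  -- key Taylor bound for each constraint
  have htay : ∀ i, |⟪gc i w₀, v⟫| ≤ β i / 2 * ‖v‖ ^ 2 := fun i =>
    taylor_key (c i) (gc i) (hgc i) (β i) (hsmooth i) w₀ w (hw₀ i) (hw i)
  set K := Real.sqrt (∑ i : Fin m, β i ^ 2) with hK
  have hsum : ‖P‖ ^ 2 ≤ Real.sqrt (∑ i : Fin m, t i ^ 2) * K * (‖v‖ ^ 2 / 2) := by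
    have h1 : ‖P‖ ^ 2 = ∑ i : Fin m, t i * ⟪gc i w₀, v⟫ := by
      rw [← hPv, ← ht, sum_inner]
      exact Finset.sum_congr rfl fun i _ => real_inner_smul_left _ _ _
    have h2 : ∑ i : Fin m, t i * ⟪gc i w₀, v⟫ ≤ ∑ i : Fin m, |t i| * (β i / 2 * ‖v‖ ^ 2) := by
      apply Finset.sum_le_sum
      intro i _
      calc t i * ⟪gc i w₀, v⟫ ≤ |t i * ⟪gc i w₀, v⟫| := le_abs_self _
        _ = |t i| * |⟪gc i w₀, v⟫| := abs_mul _ _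
        _ ≤ |t i| * (β i / 2 * ‖v‖ ^ 2) :=
            mul_le_mul_of_nonneg_left (htay i) (abs_nonneg _)
    have h3 : ∑ i : Fin m, |t i| * (β i / 2 * ‖v‖ ^ 2)
        = (∑ i : Fin m, |t i| * β i) * (‖v‖ ^ 2 / 2) := by
      rw [Finset.sum_mul]
      congr 1; funext i; ring
    have h4 : ∑ i : Fin m, |t i| * β i ≤ Real.sqrt (∑ i : Fin m, t i ^ 2) * K := by
      have hcs := Finset.sum_mul_sq_le_sq_mul_sq Finset.univ (fun i => |t i|) β
      simp only [sq_abs] at hcs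
      calc (∑ i : Fin m, |t i| * β i) ≤ |∑ i : Fin m, |t i| * β i| := le_abs_self _
        _ = Real.sqrt ((∑ i : Fin m, |t i| * β i) ^ 2) := (Real.sqrt_sq_eq_abs _).symm
        _ ≤ Real.sqrt ((∑ i : Fin m, t i ^ 2) * ∑ i : Fin m, β i ^ 2) := Real.sqrt_le_sqrt hcs
        _ = Real.sqrt (∑ i : Fin m, t i ^ 2) * K := Real.sqrt_mul (by positivity) _
    calc ‖P‖ ^ 2 = ∑ i : Fin m, t i * ⟪gc i w₀, v⟫ := h1
      _ ≤ ∑ i : Fin m, |t i| * (β i / 2 * ‖v‖ ^ 2) := h2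
      _ = (∑ i : Fin m, |t i| * β i) * (‖v‖ ^ 2 / 2) := h3
      _ ≤ Real.sqrt (∑ i : Fin m, t i ^ 2) * K * (‖v‖ ^ 2 / 2) :=
          mul_le_mul_of_nonneg_right h4 (by positivity)
  have hsv' : αc * Real.sqrt (∑ i : Fin m, t i ^ 2) ≤ ‖P‖ := by
    rw [← ht]; exact hsv w₀ hw₀ t
  have hKR : K / αc = 1 / R := by
    have h5 : (∑ i : Fin m, β i ^ 2) / αc ^ 2 = 1 / R ^ 2 := by
      rw [hRdef, Finset.sum_div]
    have h6 : (K / αc) ^ 2 = (1 / R) ^ 2 := by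
      rw [hK, div_pow, div_pow, one_pow, Real.sq_sqrt (by positivity)]
      exact h5
    have h7 : 0 ≤ K / αc := by positivity
    have h8 : 0 ≤ 1 / R := by positivity
    nlinarith [sq_nonneg (K / αc - 1 / R), sq_nonneg (K / αc + 1 / R)]
  -- combine
  have hPb : ‖P‖ ^ 2 ≤ ‖P‖ / αc * K * (‖v‖ ^ 2 / 2) := by
    refine hsum.trans ?_
    have : Real.sqrt (∑ i : Fin m, t i ^ 2) ≤ ‖P‖ / αc := by
      rw [le_div_iff₀ hαc]; linarith [hsv']
    have hK0 : 0 ≤ K := Real.sqrt_nonneg _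
    exact mul_le_mul_of_nonneg_right (mul_le_mul_of_nonneg_right this hK0)
      (div_nonneg (sq_nonneg _) two_pos.le)
  rcases eq_or_lt_of_le (norm_nonneg P) with h0 | h0
  · rw [← h0]; positivity
  · have h10 : ‖P‖ * ‖P‖ ≤ ‖P‖ * (1 / R * (‖v‖ ^ 2 / 2)) := by
      have heq2 : ‖P‖ / αc * K * (‖v‖ ^ 2 / 2) = ‖P‖ * (K / αc * (‖v‖ ^ 2 / 2)) := by ring
      rw [pow_two, heq2, hKR] at hPb
      exact hPb
    have h11 := le_of_mul_le_mul_left h10 h0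
    calc ‖P‖ ≤ 1 / R * (‖v‖ ^ 2 / 2) := h11
      _ = ‖v‖ ^ 2 / (2 * R) := by ring
end

section
/- Under the same assumptions (constraints β_i-smooth, σ_min(C(w)) ≥ α_c for all feasible w, 1/R² = Σᵢ βᵢ²/α_c²), if w and w₀ are feasible points and v̂ is a unit vector in the tangent space T(w) at w, then the projection of v̂ onto the normal space at w₀ satisfies ‖P_{T(w₀)ᶜ} v̂‖ ≤ ‖w - w₀‖/R. -/
open scoped RealInnerProductSpace

/-- For βᵢ-smooth constraints with σ_min(C(w)) ≥ α_c on the feasible set and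
1/R² = Σᵢ βᵢ²/α_c², if v̂ is a unit vector in the tangent space at a feasible w, its
projection onto the normal space at a feasible w₀ is at most ‖w - w₀‖/R. -/
theorem stmt8 {d m : ℕ}
    (c : Fin m → EuclideanSpace ℝ (Fin d) → ℝ)
    (gc : Fin m → EuclideanSpace ℝ (Fin d) → EuclideanSpace ℝ (Fin d))
    (hgc : ∀ i x, HasGradientAt (c i) (gc i x) x)
    (β : Fin m → ℝ)
    (hsmooth : ∀ i x y, ‖gc i x - gc i y‖ ≤ β i * ‖x - y‖)
    (αc : ℝ) (hαc : 0 < αc)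
    (hsv : ∀ w : EuclideanSpace ℝ (Fin d), (∀ i, c i w = 0) → ∀ t : Fin m → ℝ,
      αc * Real.sqrt (∑ i : Fin m, t i ^ 2) ≤ ‖∑ i : Fin m, t i • gc i w‖)
    (R : ℝ) (hR : 0 < R) (hRdef : 1 / R ^ 2 = ∑ i : Fin m, β i ^ 2 / αc ^ 2)
    (w w₀ : EuclideanSpace ℝ (Fin d))
    (hw : ∀ i, c i w = 0) (hw₀ : ∀ i, c i w₀ = 0)
    (v : EuclideanSpace ℝ (Fin d)) (hv : ‖v‖ = 1)
    (hvtangent : ∀ i, ⟪gc i w, v⟫ = 0) :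
    ‖(Submodule.orthogonalProjectionOnto (Submodule.span ℝ (Set.range fun i => gc i w₀)) v :
        EuclideanSpace ℝ (Fin d))‖ ≤ ‖w - w₀‖ / R := by
  set K := Submodule.span ℝ (Set.range fun i => gc i w₀) with hK
  set p : EuclideanSpace ℝ (Fin d) := (Submodule.orthogonalProjectionOnto K v : EuclideanSpace ℝ (Fin d))
    with hp
  have hpmem : p ∈ K := (Submodule.orthogonalProjectionOnto K v).2
  obtain ⟨t, ht⟩ := (Submodule.mem_span_range_iff_exists_fun ℝ).mp hpmem
  -- ht : ∑ i, t i • gc i w₀ = p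
  have hperp : ⟪p, v - p⟫ = 0 := by
    have h1 : v - p ∈ Kᗮ := K.sub_starProjection_mem_orthogonal v
    exact (Submodule.mem_orthogonal K (v - p)).mp h1 p hpmem
  have hip : ⟪p, v⟫ = ‖p‖ ^ 2 := by
    have : ⟪p, v⟫ - ⟪p, p⟫ = 0 := by rw [← inner_sub_right]; exact hperp
    have h2 : ⟪p, v⟫ = ⟪p, p⟫ := by linarith
    rw [h2, real_inner_self_eq_norm_sq]
  have hsum : ⟪p, v⟫ = ∑ i : Fin m, t i * ⟪gc i w₀ - gc i w, v⟫ := by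
    rw [← ht, sum_inner]
    refine Finset.sum_congr rfl fun i _ => ?_
    rw [real_inner_smul_left, inner_sub_left, hvtangent i, sub_zero]
  set S := Real.sqrt (∑ i : Fin m, t i ^ 2) with hS
  set B := Real.sqrt (∑ i : Fin m, β i ^ 2) with hB
  have hSnn : 0 ≤ S := Real.sqrt_nonneg _
  have hterm : ∀ i : Fin m, t i * ⟪gc i w₀ - gc i w, v⟫ ≤ |t i| * (|β i| * ‖w - w₀‖) := by
    intro i
    have h1 : ⟪gc i w₀ - gc i w, v⟫ ≤ ‖gc i w₀ - gc i w‖ := by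
      calc ⟪gc i w₀ - gc i w, v⟫ ≤ ‖gc i w₀ - gc i w‖ * ‖v‖ := real_inner_le_norm _ _
        _ = ‖gc i w₀ - gc i w‖ := by rw [hv, mul_one]
    have h1' : -⟪gc i w₀ - gc i w, v⟫ ≤ ‖gc i w₀ - gc i w‖ := by
      calc -⟪gc i w₀ - gc i w, v⟫ = ⟪gc i w - gc i w₀, v⟫ := by
            rw [← inner_neg_left]; congr 1; abel
        _ ≤ ‖gc i w - gc i w₀‖ * ‖v‖ := real_inner_le_norm _ _
        _ = ‖gc i w₀ - gc i w‖ := by rw [hv, mul_one, norm_sub_rev]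
    have habs : |⟪gc i w₀ - gc i w, v⟫| ≤ ‖gc i w₀ - gc i w‖ := abs_le.mpr ⟨by linarith, h1⟩
    have h2 : ‖gc i w₀ - gc i w‖ ≤ |β i| * ‖w - w₀‖ := by
      calc ‖gc i w₀ - gc i w‖ ≤ β i * ‖w₀ - w‖ := hsmooth i w₀ w
        _ ≤ |β i| * ‖w₀ - w‖ := by
            exact mul_le_mul_of_nonneg_right (le_abs_self _) (norm_nonneg _)
        _ = |β i| * ‖w - w₀‖ := by rw [norm_sub_rev]
    calc t i * ⟪gc i w₀ - gc i w, v⟫ ≤ |t i * ⟪gc i w₀ - gc i w, v⟫| := le_abs_self _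
      _ = |t i| * |⟪gc i w₀ - gc i w, v⟫| := abs_mul _ _
      _ ≤ |t i| * (|β i| * ‖w - w₀‖) :=
          mul_le_mul_of_nonneg_left (habs.trans h2) (abs_nonneg _)
  have hcs : ∑ i : Fin m, |t i| * |β i| ≤ S * B := by
    have h1 : (∑ i : Fin m, |t i| * |β i|) ^ 2 ≤
        (∑ i : Fin m, t i ^ 2) * (∑ i : Fin m, β i ^ 2) := by
      have := Finset.sum_mul_sq_le_sq_mul_sq Finset.univ (fun i => |t i|) (fun i => |β i|)
      calc (∑ i : Fin m, |t i| * |β i|) ^ 2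
          ≤ (∑ i : Fin m, |t i| ^ 2) * (∑ i : Fin m, |β i| ^ 2) := this
        _ = (∑ i : Fin m, t i ^ 2) * (∑ i : Fin m, β i ^ 2) := by
            simp [sq_abs]
    have h2 : ∑ i : Fin m, |t i| * |β i| ≥ 0 :=
      Finset.sum_nonneg fun i _ => mul_nonneg (abs_nonneg _) (abs_nonneg _)
    have h3 : S * B = Real.sqrt ((∑ i : Fin m, t i ^ 2) * (∑ i : Fin m, β i ^ 2)) := by
      rw [hS, hB, ← Real.sqrt_mul (Finset.sum_nonneg fun i _ => sq_nonneg _)]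
    rw [h3]
    calc ∑ i : Fin m, |t i| * |β i|
        = Real.sqrt ((∑ i : Fin m, |t i| * |β i|) ^ 2) := by rw [Real.sqrt_sq h2]
      _ ≤ Real.sqrt ((∑ i : Fin m, t i ^ 2) * (∑ i : Fin m, β i ^ 2)) :=
          Real.sqrt_le_sqrt h1
  have hBval : B = αc / R := by
    have h1 : ∑ i : Fin m, β i ^ 2 = αc ^ 2 / R ^ 2 := by
      have h2 : ∑ i : Fin m, β i ^ 2 / αc ^ 2 = (∑ i : Fin m, β i ^ 2) / αc ^ 2 := by
        rw [Finset.sum_div]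
      have hα2 : (0:ℝ) < αc ^ 2 := by positivity
      field_simp at hRdef ⊢
      rw [h2] at hRdef
      field_simp at hRdef
      linarith
    rw [hB, h1, show αc ^ 2 / R ^ 2 = (αc / R) ^ 2 by ring, Real.sqrt_sq (by positivity)]
  have hSle : S ≤ ‖p‖ / αc := by
    have := hsv w₀ hw₀ t
    rw [ht] at this
    rw [le_div_iff₀ hαc]
    linarith [this]
  have hmain : ‖p‖ ^ 2 ≤ ‖p‖ * (‖w - w₀‖ / R) := by
    calc ‖p‖ ^ 2 = ⟪p, v⟫ := hip.symm
      _ = ∑ i : Fin m, t i * ⟪gc i w₀ - gc i w, v⟫ := hsum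
      _ ≤ ∑ i : Fin m, |t i| * (|β i| * ‖w - w₀‖) := Finset.sum_le_sum fun i _ => hterm i
      _ = (∑ i : Fin m, |t i| * |β i|) * ‖w - w₀‖ := by
          rw [Finset.sum_mul]; exact Finset.sum_congr rfl fun i _ => by ring
      _ ≤ S * B * ‖w - w₀‖ := mul_le_mul_of_nonneg_right hcs (norm_nonneg _)
      _ ≤ (‖p‖ / αc) * B * ‖w - w₀‖ := by
          have hBnn : 0 ≤ B := Real.sqrt_nonneg _
          exact mul_le_mul_of_nonneg_right
            (mul_le_mul_of_nonneg_right hSle hBnn) (norm_nonneg _)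
      _ = ‖p‖ * (‖w - w₀‖ / R) := by
          rw [hBval]; field_simp
  rcases eq_or_lt_of_le (norm_nonneg p) with h0 | h0
  · rw [← h0]; positivity
  · nlinarith [hmain]
end

section
/- Under the same assumptions, if w and w₀ are feasible and v̂ is a unit vector in the normal space T(w)ᶜ at w, then the projection of v̂ onto the tangent space at w₀ satisfies ‖P_{T(w₀)} v̂‖ ≤ ‖w - w₀‖/R, where 1/R² = Σᵢ βᵢ²/α_c². -/
open scoped RealInnerProductSpace

/-- For βᵢ-smooth constraints with σ_min(C(w)) ≥ α_c on the feasible set and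
1/R² = Σᵢ βᵢ²/α_c², if v̂ is a unit vector in the normal space at a feasible w, its
projection onto the tangent space at a feasible w₀ is at most ‖w - w₀‖/R. -/
theorem stmt9 {d m : ℕ}
    (c : Fin m → EuclideanSpace ℝ (Fin d) → ℝ)
    (gc : Fin m → EuclideanSpace ℝ (Fin d) → EuclideanSpace ℝ (Fin d))
    (hgc : ∀ i x, HasGradientAt (c i) (gc i x) x)
    (β : Fin m → ℝ)
    (hsmooth : ∀ i x y, ‖gc i x - gc i y‖ ≤ β i * ‖x - y‖)
    (αc : ℝ) (hαc : 0 < αc)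
    (hsv : ∀ w : EuclideanSpace ℝ (Fin d), (∀ i, c i w = 0) → ∀ t : Fin m → ℝ,
      αc * Real.sqrt (∑ i : Fin m, t i ^ 2) ≤ ‖∑ i : Fin m, t i • gc i w‖)
    (R : ℝ) (hR : 0 < R) (hRdef : 1 / R ^ 2 = ∑ i : Fin m, β i ^ 2 / αc ^ 2)
    (w w₀ : EuclideanSpace ℝ (Fin d))
    (hw : ∀ i, c i w = 0) (hw₀ : ∀ i, c i w₀ = 0)
    (v : EuclideanSpace ℝ (Fin d)) (hv : ‖v‖ = 1)
    (hvnormal : v ∈ Submodule.span ℝ (Set.range fun i => gc i w)) :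
    ‖(Submodule.orthogonalProjectionOnto (Submodule.span ℝ (Set.range fun i => gc i w₀))ᗮ v :
        EuclideanSpace ℝ (Fin d))‖ ≤ ‖w - w₀‖ / R := by
  obtain ⟨t, ht⟩ := (Submodule.mem_span_range_iff_exists_fun ℝ).mp hvnormal
  set S := Submodule.span ℝ (Set.range fun i => gc i w₀) with hS
  set P := Submodule.orthogonalProjectionOnto Sᗮ with hPdef
  -- P kills the gradients at w₀
  have hP0 : ∀ i, P (gc i w₀) = 0 := fun i =>
    Submodule.orthogonalProjectionOnto_apply_of_mem_orthogonal
      (Submodule.le_orthogonal_orthogonal S (Submodule.subset_span ⟨i, rfl⟩))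
  have hPv : P v = P (∑ i, t i • (gc i w - gc i w₀)) := by
    have h1 : (∑ i, t i • (gc i w - gc i w₀))
        = v - ∑ i, t i • gc i w₀ := by
      rw [← ht, ← Finset.sum_sub_distrib]
      exact Finset.sum_congr rfl fun i _ => smul_sub _ _ _
    rw [h1, map_sub, map_sum]
    have : (∑ i, P (t i • gc i w₀)) = 0 := by
      refine Finset.sum_eq_zero fun i _ => ?_
      rw [map_smul, hP0 i, smul_zero]
    rw [this, sub_zero]
  -- norm of projection is bounded by norm of the argument
  have hPle : ∀ x : EuclideanSpace ℝ (Fin d), ‖(P x : EuclideanSpace ℝ (Fin d))‖ ≤ ‖x‖ := by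
    intro x
    have := (Submodule.orthogonalProjectionOnto Sᗮ).le_opNorm x
    calc ‖(P x : EuclideanSpace ℝ (Fin d))‖ = ‖P x‖ := rfl
      _ ≤ ‖Submodule.orthogonalProjectionOnto Sᗮ‖ * ‖x‖ := this
      _ ≤ 1 * ‖x‖ := by
          exact mul_le_mul_of_nonneg_right (Submodule.orthogonalProjectionOnto_norm_le _) (norm_nonneg _)
      _ = ‖x‖ := one_mul _
  -- bound on the coefficients
  have htbound : Real.sqrt (∑ i, t i ^ 2) ≤ 1 / αc := by
    have := hsv w hw t
    rw [ht, hv] at this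
    rw [le_div_iff₀ hαc]
    linarith [this]
  have htnn : (0:ℝ) ≤ Real.sqrt (∑ i, t i ^ 2) := Real.sqrt_nonneg _
  -- triangle inequality + smoothness
  have hsum : ‖∑ i, t i • (gc i w - gc i w₀)‖ ≤ (∑ i, |t i| * |β i|) * ‖w - w₀‖ := by
    calc ‖∑ i, t i • (gc i w - gc i w₀)‖ ≤ ∑ i, ‖t i • (gc i w - gc i w₀)‖ :=
          norm_sum_le _ _
      _ ≤ ∑ i, |t i| * (|β i| * ‖w - w₀‖) := by
          refine Finset.sum_le_sum fun i _ => ?_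
          rw [norm_smul, Real.norm_eq_abs]
          refine mul_le_mul_of_nonneg_left ?_ (abs_nonneg _)
          exact (hsmooth i w w₀).trans
            (mul_le_mul_of_nonneg_right (le_abs_self _) (norm_nonneg _))
      _ = (∑ i, |t i| * |β i|) * ‖w - w₀‖ := by
          rw [Finset.sum_mul]; exact Finset.sum_congr rfl fun i _ => by ring
  -- Cauchy-Schwarz
  have hCS : (∑ i, |t i| * |β i|)
      ≤ Real.sqrt (∑ i, t i ^ 2) * Real.sqrt (∑ i, β i ^ 2) := by
    have h1 : (∑ i, |t i| * |β i|) ^ 2 ≤ (∑ i, t i ^ 2) * (∑ i, β i ^ 2) := by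
      have := Finset.sum_mul_sq_le_sq_mul_sq Finset.univ (fun i => |t i|) (fun i => |β i|)
      simpa [sq_abs] using this
    have h2 : (0:ℝ) ≤ ∑ i, |t i| * |β i| :=
      Finset.sum_nonneg fun i _ => mul_nonneg (abs_nonneg _) (abs_nonneg _)
    have h3 := Real.sqrt_le_sqrt h1
    rwa [Real.sqrt_sq h2, Real.sqrt_mul (Finset.sum_nonneg fun i _ => sq_nonneg _)] at h3
  -- identify sqrt(∑ β²)/αc with 1/R
  have hRβ : Real.sqrt (∑ i, β i ^ 2) / αc = 1 / R := by
    have h1 : (1 / R) ^ 2 = (∑ i, β i ^ 2) / αc ^ 2 := by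
      rw [div_pow, one_pow, hRdef, Finset.sum_div]
    have h2 : (0:ℝ) ≤ 1 / R := le_of_lt (by positivity)
    have h3 : 1 / R = Real.sqrt ((∑ i, β i ^ 2) / αc ^ 2) := by
      rw [← h1, Real.sqrt_sq h2]
    rw [h3, Real.sqrt_div (Finset.sum_nonneg fun i _ => sq_nonneg _),
      Real.sqrt_sq (le_of_lt hαc)]
  -- put everything together
  have hβnn : (0:ℝ) ≤ Real.sqrt (∑ i, β i ^ 2) := Real.sqrt_nonneg _
  calc ‖(P v : EuclideanSpace ℝ (Fin d))‖
      = ‖(P (∑ i, t i • (gc i w - gc i w₀)) : EuclideanSpace ℝ (Fin d))‖ := by rw [hPv]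
    _ ≤ ‖∑ i, t i • (gc i w - gc i w₀)‖ := hPle _
    _ ≤ (∑ i, |t i| * |β i|) * ‖w - w₀‖ := hsum
    _ ≤ (Real.sqrt (∑ i, t i ^ 2) * Real.sqrt (∑ i, β i ^ 2)) * ‖w - w₀‖ :=
        mul_le_mul_of_nonneg_right hCS (norm_nonneg _)
    _ ≤ ((1 / αc) * Real.sqrt (∑ i, β i ^ 2)) * ‖w - w₀‖ := by
        refine mul_le_mul_of_nonneg_right (mul_le_mul_of_nonneg_right htbound hβnn)
          (norm_nonneg _)
    _ = ‖w - w₀‖ / R := by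
        rw [one_div_mul_eq_div, div_mul_eq_mul_div, mul_comm, mul_div_assoc, hRβ,
          mul_one_div]
end

section
/- For matrices H and G with the same number of columns, the Moore–Penrose pseudoinverse of the transpose of the Khatri–Rao product satisfies ((H ⊙ G)ᵀ)† = (H ⊙ G)((HᵀH) .* (GᵀG))†, where ⊙ denotes the columnwise Khatri–Rao product and .* denotes the entrywise (Hadamard) product—provided H ⊙ G has full column rank. -/
open Matrix
/-- The four Penrose conditions: P is the Moore–Penrose pseudoinverse of M. -/
def IsMoorePenrose {m n : Type*} [Fintype m] [Fintype n]
    (M : Matrix m n ℝ) (P : Matrix n m ℝ) : Prop :=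
  M * P * M = M ∧ P * M * P = P ∧ (M * P)ᵀ = M * P ∧ (P * M)ᵀ = P * M

/-- For the Khatri–Rao product K = H ⊙ G with full column rank,
((H ⊙ G)ᵀ)† = (H ⊙ G)·((HᵀH) .* (GᵀG))†. -/
theorem stmt12 {a b c : ℕ}
    (H : Matrix (Fin a) (Fin c) ℝ) (G : Matrix (Fin b) (Fin c) ℝ)
    (K : Matrix (Fin a × Fin b) (Fin c) ℝ)
    (hK : ∀ (i : Fin a) (j : Fin b) (k : Fin c), K (i, j) k = H i k * G j k)
    (hrank : K.rank = c)
    (P : Matrix (Fin c) (Fin c) ℝ)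
    (hP : IsMoorePenrose (Matrix.hadamard (Hᵀ * H) (Gᵀ * G)) P) :
    IsMoorePenrose Kᵀ (K * P) := by
  set A : Matrix (Fin c) (Fin c) ℝ := Matrix.hadamard (Hᵀ * H) (Gᵀ * G) with hAdef
  have hKK : Kᵀ * K = A := by
    ext i j
    simp only [hAdef, mul_apply, transpose_apply, hadamard_apply, Fintype.sum_prod_type]
    rw [Finset.sum_mul_sum]
    refine Finset.sum_congr rfl fun x _ => Finset.sum_congr rfl fun y _ => ?_
    rw [hK, hK]; ring
  -- A is invertible
  have hArank : A.rank = c := by rw [← hKK, K.rank_transpose_mul_self, hrank]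
  have hU : IsUnit A := by
    rw [← mulVec_surjective_iff_isUnit]
    have htop : LinearMap.range A.mulVecLin = ⊤ := by
      apply Submodule.eq_top_of_finrank_eq
      rw [← Matrix.rank, hArank, Module.finrank_fintype_fun_eq_card, Fintype.card_fin]
    intro v
    obtain ⟨w, hw⟩ := htop ▸ Submodule.mem_top (x := v)
    exact ⟨w, hw⟩
  have hd : IsUnit A.det := (Matrix.isUnit_iff_isUnit_det A).mp hU
  have hAAinv : A * A⁻¹ = 1 := Matrix.mul_nonsing_inv A hd
  have hAinvA : A⁻¹ * A = 1 := Matrix.nonsing_inv_mul A hd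
  have h1 : A * P * A = A := hP.1
  have hAP : A * P = 1 := by
    have h2 : A * P * A * A⁻¹ = A * A⁻¹ := by rw [h1]
    rwa [Matrix.mul_assoc (A * P), hAAinv, Matrix.mul_one] at h2
  have hPA : P * A = 1 := by
    have h2 : A⁻¹ * (A * P * A) = A⁻¹ * A := by rw [h1]
    rwa [← Matrix.mul_assoc, ← Matrix.mul_assoc, hAinvA, Matrix.one_mul] at h2
  have hAsymm : Aᵀ = A := by
    ext i j
    simp only [hAdef, transpose_apply, hadamard_apply, mul_apply]
    congr 1 <;> exact Finset.sum_congr rfl fun x _ => mul_comm _ _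
  have hPsymm : Pᵀ = P := by
    have h3 : Pᵀ * Aᵀ = 1 := by rw [← Matrix.transpose_mul, hAP, Matrix.transpose_one]
    rw [hAsymm] at h3
    calc Pᵀ = Pᵀ * (A * P) := by rw [hAP, Matrix.mul_one]
    _ = (Pᵀ * A) * P := by rw [Matrix.mul_assoc]
    _ = P := by rw [h3, Matrix.one_mul]
  refine ⟨?_, ?_, ?_, ?_⟩
  · have h4 : Kᵀ * (K * P) * Kᵀ = (Kᵀ * K) * P * Kᵀ := by simp only [Matrix.mul_assoc]
    rw [h4, hKK, hAP, Matrix.one_mul]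
  · have : K * P * Kᵀ * (K * P) = K * (P * (Kᵀ * K) * P) := by
      simp only [Matrix.mul_assoc]
    rw [this, hKK, hP.2.1]
  · rw [← Matrix.mul_assoc, hKK, hAP]
    simp
  · rw [Matrix.transpose_mul, Matrix.transpose_mul, Matrix.transpose_transpose, hPsymm,
      Matrix.mul_assoc]
end

section
/- In a linear latent tree model, define the multivariate information distance between variables y_a and y_b as dist(v_a, v_b) = -log( Πᵢ₌₁ᵏ σᵢ(E[y_a y_bᵀ]) / sqrt(det E[y_a y_aᵀ] · det E[y_b y_bᵀ]) ), where σᵢ denotes the i-th largest singular value. Then dist is additive along paths: if v_b lies on the path from v_a to v_c and the conditional expectation relations E[y_a|y_b] = A y_b, E[y_c|y_b] = B y_b hold with E[y_a y_aᵀ], E[y_b y_bᵀ], E[y_c y_cᵀ] full rank (rank-k structure), then dist(v_a, v_c) = dist(v_a, v_b) + dist(v_b, v_c). -/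
open Matrix

/-- Additivity of the multivariate information distance along a path of a linear latent
tree model: with second moments Σ and transition matrices A = E[y_a|y_b], B = E[y_c|y_b]
of full rank, dist(a,c) = dist(a,b) + dist(b,c), where
dist(Mxy, Mxx, Myy) = -log(Πᵢσᵢ(Mxy) / sqrt(det Mxx · det Myy)). -/
theorem stmt14 {k : ℕ}
    (Saa Sbb Scc Sab Sbc Sac A B : Matrix (Fin k) (Fin k) ℝ)
    (hSaa : Saa.PosDef) (hSbb : Sbb.PosDef) (hScc : Scc.PosDef)
    (hA : IsUnit A.det) (hB : IsUnit B.det)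
    (hab : Sab = A * Sbb) (hbc : Sbc = Sbb * Bᵀ) (hac : Sac = A * Sbb * Bᵀ)
    (dist : Matrix (Fin k) (Fin k) ℝ → Matrix (Fin k) (Fin k) ℝ →
      Matrix (Fin k) (Fin k) ℝ → ℝ)
    (hdist : ∀ Mxy Mxx Myy : Matrix (Fin k) (Fin k) ℝ,
      dist Mxy Mxx Myy =
        -Real.log (Real.sqrt ((Mxyᵀ * Mxy).det) / Real.sqrt (Mxx.det * Myy.det))) :
    dist Sac Saa Scc = dist Sab Saa Sbb + dist Sbc Sbb Scc := by
  have ha : A.det ≠ 0 := hA.ne_zero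
  have hb : B.det ≠ 0 := hB.ne_zero
  have hsa := hSaa.det_pos
  have hsb := hSbb.det_pos
  have hsc := hScc.det_pos
  have key : ∀ M : Matrix (Fin k) (Fin k) ℝ, Real.sqrt ((Mᵀ * M).det) = |M.det| := by
    intro M
    rw [det_mul, det_transpose, ← sq, Real.sqrt_sq_eq_abs]
  rw [hdist, hdist, hdist, hab, hbc, hac, key, key, key]
  simp only [det_mul, det_transpose, abs_mul, abs_of_pos hsb]
  have hx : |A.det| * Sbb.det / Real.sqrt (Saa.det * Sbb.det) ≠ 0 := by
    apply div_ne_zero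
    · positivity
    · exact (Real.sqrt_pos.mpr (by positivity)).ne'
  have hy : Sbb.det * |B.det| / Real.sqrt (Sbb.det * Scc.det) ≠ 0 := by
    apply div_ne_zero
    · positivity
    · exact (Real.sqrt_pos.mpr (by positivity)).ne'
  rw [← neg_add, ← Real.log_mul hx hy]
  congr 2
  rw [Real.sqrt_mul hsa.le, Real.sqrt_mul hsb.le, Real.sqrt_mul hsa.le]
  have hss : Real.sqrt Sbb.det * Real.sqrt Sbb.det = Sbb.det :=
    Real.mul_self_sqrt hsb.le
  have h1 : Real.sqrt Saa.det ≠ 0 := (Real.sqrt_pos.mpr hsa).ne'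
  have h2 : Real.sqrt Sbb.det ≠ 0 := (Real.sqrt_pos.mpr hsb).ne'
  have h3 : Real.sqrt Scc.det ≠ 0 := (Real.sqrt_pos.mpr hsc).ne'
  field_simp
  rw [sq, hss]
end

section
/- Under an identifiable (minimal) linear latent tree model, contracting every hidden node to its surrogate observed node (the observed node at minimum information distance) maps the latent tree T onto the minimum spanning tree over observed nodes with respect to the additive information distances. In particular: (i) if (h_i, h_j) is an edge of T then (Sg(h_i), Sg(h_j)) is an edge of the MST, and (ii) if v_h ∈ Sg⁻¹(v_j) then every node on the path connecting v_j and v_h in T belongs to Sg⁻¹(v_j). -/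
set_option linter.unusedSectionVars false

open SimpleGraph Walk

namespace Stmt16Aux

variable {V : Type*} [DecidableEq V] {T : SimpleGraph V}

/-- weight of a walk -/
def wt (ℓ : V → V → ℝ) {u v : V} (p : T.Walk u v) : ℝ :=
  (p.darts.map fun e => ℓ e.toProd.1 e.toProd.2).sum

variable {ℓ : V → V → ℝ}

@[simp] lemma wt_nil {u : V} : wt ℓ (Walk.nil : T.Walk u u) = 0 := rfl

@[simp] lemma wt_cons {u v w : V} (h : T.Adj u v) (p : T.Walk v w) :
    wt ℓ (Walk.cons h p) = ℓ u v + wt ℓ p := by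
  simp [wt, darts_cons]

@[simp] lemma wt_append {u v w : V} (p : T.Walk u v) (q : T.Walk v w) :
    wt ℓ (p.append q) = wt ℓ p + wt ℓ q := by
  simp [wt, darts_append]

lemma wt_reverse (hsymm : ∀ u v, ℓ u v = ℓ v u) {u v : V} (p : T.Walk u v) :
    wt ℓ p.reverse = wt ℓ p := by
  induction p with
  | nil => simp
  | @cons a b c h p ih =>
    rw [Walk.reverse_cons, wt_append, wt_cons, wt_cons, wt_nil, ih, hsymm b a]
    ring

lemma wt_eq_edges_sum (hsymm : ∀ u v, ℓ u v = ℓ v u) {u v : V} (p : T.Walk u v) :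
    wt ℓ p = (p.edges.map (Sym2.lift ⟨ℓ, hsymm⟩)).sum := by
  simp only [wt, Walk.edges, List.map_map]
  congr 1

lemma wt_nonneg (hpos : ∀ u v, T.Adj u v → 0 < ℓ u v) {u v : V} (p : T.Walk u v) :
    0 ≤ wt ℓ p := by
  apply List.sum_nonneg
  intro a ha
  obtain ⟨d, hd, rfl⟩ := List.mem_map.mp ha
  exact (hpos _ _ d.adj).le

lemma wt_bypass_le (hsymm : ∀ u v, ℓ u v = ℓ v u) (hpos : ∀ u v, T.Adj u v → 0 < ℓ u v)
    {u v : V} (p : T.Walk u v) : wt ℓ p.bypass ≤ wt ℓ p := by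
  rw [wt_eq_edges_sum hsymm, wt_eq_edges_sum hsymm]
  have hsub : p.bypass.edges ⊆ p.edges := p.edges_bypass_subset
  have hnd : p.bypass.edges.Nodup := p.bypass_isPath.isTrail.edges_nodup
  obtain ⟨l, hperm, hsl⟩ := hnd.subperm hsub
  calc (p.bypass.edges.map (Sym2.lift ⟨ℓ, hsymm⟩)).sum
      = (l.map (Sym2.lift ⟨ℓ, hsymm⟩)).sum := ((hperm.map _).sum_eq).symm
    _ ≤ (p.edges.map (Sym2.lift ⟨ℓ, hsymm⟩)).sum := by
        apply List.Sublist.sum_le_sum (hsl.map _)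
        intro a ha
        obtain ⟨e, he, rfl⟩ := List.mem_map.mp ha
        have : e ∈ T.edgeSet := p.edges_subset_edgeSet he
        induction e with
        | h x y => simpa using (hpos x y this).le


section Dist

variable (hT : T.IsTree) (dist : V → V → ℝ)
  (hdist : ∀ (u v : V) (p : T.Walk u v), p.IsPath → dist u v = wt ℓ p)

include hT hdist

lemma dist_self (v : V) : dist v v = 0 := by
  simpa using hdist v v Walk.nil (IsPath.nil)

lemma dist_symm (hsymm : ∀ u v, ℓ u v = ℓ v u) (u v : V) : dist u v = dist v u := by
  obtain ⟨p, hp, -⟩ := hT.existsUnique_path u v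
  rw [hdist u v p hp, hdist v u p.reverse hp.reverse, wt_reverse hsymm]

lemma dist_triangle (hsymm : ∀ u v, ℓ u v = ℓ v u) (hpos : ∀ u v, T.Adj u v → 0 < ℓ u v)
    (u v w : V) : dist u w ≤ dist u v + dist v w := by
  obtain ⟨p, hp, -⟩ := hT.existsUnique_path u v
  obtain ⟨q, hq, -⟩ := hT.existsUnique_path v w
  rw [hdist u v p hp, hdist v w q hq, hdist u w (p.append q).bypass (bypass_isPath _),
    ← wt_append]
  exact wt_bypass_le hsymm hpos _

lemma dist_add_support {u w : V} (p : T.Walk u w) (hp : p.IsPath) {v : V}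
    (hv : v ∈ p.support) : dist u w = dist u v + dist v w := by
  rw [hdist u v (p.takeUntil v hv) (hp.takeUntil hv),
    hdist v w (p.dropUntil v hv) (hp.dropUntil hv),
    hdist u w p hp, ← wt_append, Walk.take_spec]

end Dist

end Stmt16Aux


open Stmt16Aux in
/-- In an identifiable latent tree (hidden nodes of degree ≥ 3) with additive positive
information distances and distinct pairwise observed distances, the surrogate map
(nearest observed node) sends the latent tree onto the MST over the observed nodes:
(i) neighbors in T have their (distinct) surrogates adjacent in the MST, and
(ii) every node on the path from an observed node v_j to a hidden node with surrogate
v_j also has surrogate v_j. -/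
theorem stmt16 {V : Type*} [Fintype V] [DecidableEq V]
    (T : SimpleGraph V) [DecidableRel T.Adj] (hT : T.IsTree)
    (obs : V → Prop) [DecidablePred obs]
    (hident : ∀ v, ¬ obs v → 3 ≤ T.degree v)
    (ℓ : V → V → ℝ) (hsymm : ∀ u v, ℓ u v = ℓ v u)
    (hpos : ∀ u v, T.Adj u v → 0 < ℓ u v)
    (dist : V → V → ℝ)
    (hdist : ∀ (u v : V) (p : T.Walk u v), p.IsPath →
      dist u v = (p.darts.map fun e => ℓ e.toProd.1 e.toProd.2).sum)
    (hdistinct : ∀ x y x' y' : V, obs x → obs y → obs x' → obs y' →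
      x ≠ y → x' ≠ y' → dist x y = dist x' y' →
      (x = x' ∧ y = y') ∨ (x = y' ∧ y = x'))
    (Sg : V → V) (hSgobs : ∀ v, obs (Sg v))
    (hSg : ∀ v x, obs x → x ≠ Sg v → dist v (Sg v) < dist v x)
    (M : SimpleGraph {v : V // obs v}) [DecidableRel M.Adj] (hM : M.IsTree)
    (hMmin : ∀ (M' : SimpleGraph {v : V // obs v}), ∀ (_ : DecidableRel M'.Adj),
      M'.IsTree →
      (∑ u : {v : V // obs v}, ∑ w : {v : V // obs v},
        if M.Adj u w then dist u.1 w.1 else 0)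
      ≤ (∑ u : {v : V // obs v}, ∑ w : {v : V // obs v},
        if M'.Adj u w then dist u.1 w.1 else 0)) :
    (∀ hi hj : V, T.Adj hi hj → Sg hi ≠ Sg hj →
      M.Adj ⟨Sg hi, hSgobs hi⟩ ⟨Sg hj, hSgobs hj⟩) ∧
    (∀ vj vh : V, ¬ obs vh → Sg vh = vj →
      ∀ (p : T.Walk vj vh), p.IsPath → ∀ u ∈ p.support, Sg u = vj) := by
  have hdist' : ∀ (u v : V) (p : T.Walk u v), p.IsPath → dist u v = wt ℓ p := hdist
  have ds : ∀ u v, dist u v = dist v u := dist_symm hT dist hdist' hsymm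
  have dtri : ∀ u v w, dist u w ≤ dist u v + dist v w :=
    dist_triangle hT dist hdist' hsymm hpos
  constructor
  · intro hi hj hadj hne
    -- the unique path function
    obtain ⟨P, hP, hPu⟩ : ∃ P : ∀ u v : V, T.Walk u v,
        (∀ u v, (P u v).IsPath) ∧ (∀ u v (q : T.Walk u v), q.IsPath → q = P u v) := by
      choose P h1 h2 using fun u v => hT.existsUnique_path u v
      exact ⟨P, h1, h2⟩
    have hrev : ∀ u v, (P u v).reverse = P v u := fun u v => hPu v u _ ((hP u v).reverse)
    -- S1 : the two sides are disjoint
    have S1 : ∀ (x y : V), T.Adj x y → ∀ v, y ∉ (P x v).support → x ∉ (P y v).support → False := by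
      intro x y hxy v hA hB
      have hq : (Walk.cons hxy.symm (P x v)).IsPath :=
        (Walk.cons_isPath_iff _ _).2 ⟨hP _ _, hA⟩
      have heq := hPu y v _ hq
      apply hB
      rw [← heq]
      simp [Walk.support_cons]
    -- S2 : dichotomy
    have S2 : ∀ (x y : V), x ≠ y → ∀ v, y ∈ (P x v).support → x ∉ (P y v).support := by
      intro x y hxyne v hmem
      have hr : ((P x v).dropUntil y hmem).IsPath := (hP x v).dropUntil hmem
      have hnotin : x ∉ ((P x v).dropUntil y hmem).support := by
        intro hin
        have hnd : ((P x v).support).Nodup := (hP x v).support_nodup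
        rw [← Walk.take_spec (P x v) hmem, Walk.support_append] at hnd
        have h1 : x ∈ ((P x v).takeUntil y hmem).support := Walk.start_mem_support _
        have h2 : x ∈ ((P x v).dropUntil y hmem).support.tail := by
          have hsc := Walk.support_eq_cons ((P x v).dropUntil y hmem)
          rw [hsc] at hin
          rcases List.mem_cons.mp hin with h | h
          · exact absurd h hxyne
          · exact h
        exact (List.disjoint_of_nodup_append hnd) h1 h2
      have heq := hPu y v _ hr
      rw [← heq]
      exact hnotin
    -- S3 : distance across the edge
    have S3 : ∀ (x y : V) (hxy : T.Adj x y) (v : V), x ∉ (P y v).support →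
        dist x v = ℓ x y + dist y v := by
      intro x y hxy v hB
      have hq : (Walk.cons hxy (P y v)).IsPath := (Walk.cons_isPath_iff _ _).2 ⟨hP _ _, hB⟩
      rw [hdist' x v _ hq, wt_cons, ← hdist' y v _ (hP _ _)]
    have hl : 0 < ℓ hi hj := hpos _ _ hadj
    -- Sg hi is on hi's side
    have hAa : hj ∉ (P hi (Sg hi)).support := by
      by_contra hmem
      have hBa : hi ∉ (P hj (Sg hi)).support := S2 hi hj hadj.ne _ hmem
      have e1 : dist hi (Sg hi) = ℓ hi hj + dist hj (Sg hi) := S3 hi hj hadj _ hBa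
      have e2 : dist hj (Sg hj) < dist hj (Sg hi) := hSg hj (Sg hi) (hSgobs hi) hne
      have e3 : dist hi (Sg hi) < dist hi (Sg hj) := hSg hi (Sg hj) (hSgobs hj) hne.symm
      by_cases hb : hi ∈ (P hj (Sg hj)).support
      · have hAb : hj ∉ (P hi (Sg hj)).support := S2 hj hi hadj.ne.symm _ hb
        have e4 : dist hj (Sg hj) = ℓ hj hi + dist hi (Sg hj) := S3 hj hi hadj.symm _ hAb
        rw [hsymm hj hi] at e4
        linarith
      · have e4 : dist hi (Sg hj) = ℓ hi hj + dist hj (Sg hj) := S3 hi hj hadj _ hb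
        linarith
    -- Sg hj is on hj's side
    have hBb : hi ∉ (P hj (Sg hj)).support := by
      by_contra hmem
      have hAb : hj ∉ (P hi (Sg hj)).support := S2 hj hi hadj.ne.symm _ hmem
      have e1 : dist hj (Sg hj) = ℓ hj hi + dist hi (Sg hj) := S3 hj hi hadj.symm _ hAb
      rw [hsymm hj hi] at e1
      have e2 : dist hj (Sg hj) < dist hj (Sg hi) := hSg hj (Sg hi) (hSgobs hi) hne
      have e3 : dist hi (Sg hi) < dist hi (Sg hj) := hSg hi (Sg hj) (hSgobs hj) hne.symm
      by_cases hb : hj ∈ (P hi (Sg hi)).support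
      · have hBa : hi ∉ (P hj (Sg hi)).support := S2 hi hj hadj.ne _ hb
        have e4 : dist hi (Sg hi) = ℓ hi hj + dist hj (Sg hi) := S3 hi hj hadj _ hBa
        linarith
      · have e4 : dist hj (Sg hi) = ℓ hj hi + dist hi (Sg hi) := S3 hj hi hadj.symm _ hb
        rw [hsymm hj hi] at e4
        linarith
    -- S5 : crossing distance formula
    have S5 : ∀ x y : V, hj ∉ (P hi x).support → hi ∉ (P hj y).support →
        dist x y = dist x hi + ℓ hi hj + dist hj y := by
      intro x y hAx hBy
      have hAx' : hj ∉ (P x hi).support := by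
        rw [← hrev hi x, Walk.support_reverse]
        simpa using hAx
      have hdisj : ∀ u, u ∈ (P x hi).support → u ∈ (P hj y).support → False := by
        intro u h1 h2
        have hr1 : ((P x hi).dropUntil u h1).IsPath := (hP _ _).dropUntil h1
        have hr1' : hj ∉ ((P x hi).dropUntil u h1).support :=
          fun h => hAx' ((Walk.support_dropUntil_subset _ h1) h)
        have hq2 : (((P x hi).dropUntil u h1).concat hadj).IsPath := by
          rw [← Walk.isPath_reverse_iff, Walk.reverse_concat]
          exact (Walk.cons_isPath_iff _ _).2 ⟨hr1.reverse,
            by rwa [Walk.support_reverse, List.mem_reverse]⟩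
        have hr2 : hi ∉ ((P hj y).takeUntil u h2).support :=
          fun h => hBy ((Walk.support_takeUntil_subset _ h2) h)
        have hq3 : (((P hj y).takeUntil u h2).reverse).IsPath :=
          ((hP _ _).takeUntil h2).reverse
        have heq2 := hPu u hj _ hq2
        have heq3 := hPu u hj _ hq3
        have hin2 : hi ∈ (P u hj).support := by
          rw [← heq2, Walk.support_concat, List.mem_append]
          exact Or.inl (Walk.end_mem_support _)
        have hin3 : hi ∉ (P u hj).support := by
          rw [← heq3, Walk.support_reverse, List.mem_reverse]
          exact hr2
        exact hin3 hin2
      have hW : ((P x hi).append (Walk.cons hadj (P hj y))).IsPath := by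
        rw [Walk.isPath_def, Walk.support_append, Walk.support_cons, List.tail_cons]
        rw [List.nodup_append]
        exact ⟨(hP x hi).support_nodup, (hP hj y).support_nodup,
          fun u h1 v h2 huv => by subst huv; exact hdisj u h1 h2⟩
      rw [hdist' x y _ hW, wt_append, wt_cons, ← hdist' _ _ _ (hP x hi),
        ← hdist' _ _ _ (hP hj y)]
      ring
    -- S6 : the crossing edge (Sg hi, Sg hj) is strictly lightest
    have S6 : ∀ x y : V, obs x → obs y → hj ∉ (P hi x).support → hi ∉ (P hj y).support →
        ¬(x = Sg hi ∧ y = Sg hj) → dist (Sg hi) (Sg hj) < dist x y := by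
      intro x y hox hoy hAx hBy hxy
      have e1 := S5 (Sg hi) (Sg hj) hAa hBb
      have e2 := S5 x y hAx hBy
      have c1 : dist hi (Sg hi) ≤ dist hi x := by
        rcases eq_or_ne x (Sg hi) with rfl | hxa
        · exact le_refl _
        · exact (hSg hi x hox hxa).le
      have c2 : dist hj (Sg hj) ≤ dist hj y := by
        rcases eq_or_ne y (Sg hj) with rfl | hyb
        · exact le_refl _
        · exact (hSg hj y hoy hyb).le
      have strict : dist hi (Sg hi) < dist hi x ∨ dist hj (Sg hj) < dist hj y := by
        rcases not_and_or.mp hxy with h | h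
        · exact Or.inl (hSg hi x hox h)
        · exact Or.inr (hSg hj y hoy h)
      have d1 := ds (Sg hi) hi
      have d2 := ds x hi
      rcases strict with h | h <;> linarith
    -- Now the MST part
    by_contra hnadj
    set a' : {v : V // obs v} := ⟨Sg hi, hSgobs hi⟩ with ha'
    set b' : {v : V // obs v} := ⟨Sg hj, hSgobs hj⟩ with hb'
    have hab' : a' ≠ b' := fun h => hne (congrArg Subtype.val h)
    -- crossing lemma for walks in M
    have cross : ∀ (u w : {v : V // obs v}) (p : M.Walk u w), p.IsPath →
        hj ∉ (P hi u.1).support → hi ∉ (P hj w.1).support →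
        ∃ x y : {v : V // obs v}, M.Adj x y ∧ hj ∉ (P hi x.1).support ∧
          hi ∉ (P hj y.1).support ∧ x ∈ p.support ∧ y ∈ p.support ∧
          (M \ SimpleGraph.fromEdgeSet {s(x,y)}).Reachable u x ∧
          (M \ SimpleGraph.fromEdgeSet {s(x,y)}).Reachable y w := by
      intro u w p
      induction p with
      | nil =>
        intro _ hA hB
        exact absurd (S1 hi hj hadj _ hA hB) (fun h => h)
      | @cons u u₁ w h q ih =>
        intro hp hA hB
        have hq : q.IsPath := hp.of_cons
        have hu : u ∉ q.support := ((Walk.cons_isPath_iff _ _).1 hp).2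
        by_cases hside : hi ∈ (P hj u₁.1).support
        · -- u₁ is still on hi's side
          have hAu₁ : hj ∉ (P hi u₁.1).support := S2 hj hi hadj.ne.symm _ hside
          obtain ⟨x, y, hxy, hAx, hBy, hxs, hys, hru, hry⟩ := ih hq hAu₁ hB
          refine ⟨x, y, hxy, hAx, hBy, by simp [Walk.support_cons, hxs],
            by simp [Walk.support_cons, hys], ?_, hry⟩
          have hadj' : (M \ SimpleGraph.fromEdgeSet {s(x,y)}).Adj u u₁ := by
            rw [SimpleGraph.sdiff_adj]
            refine ⟨h, ?_⟩
            rw [SimpleGraph.fromEdgeSet_adj]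
            rintro ⟨hmem, -⟩
            rw [Set.mem_singleton_iff] at hmem
            rcases Sym2.eq_iff.mp hmem with ⟨rfl, rfl⟩ | ⟨rfl, rfl⟩
            · exact hu hxs
            · exact hu hys
          exact hadj'.reachable.trans hru
        · -- u₁ crossed to hj's side : the dart (u, u₁) is the crossing edge
          refine ⟨u, u₁, h, hA, hside, by simp [Walk.support_cons],
            by simp [Walk.support_cons, Walk.start_mem_support], Reachable.refl _, ?_⟩
          have hsub : ∀ e ∈ q.edges, e ∈ (M \ SimpleGraph.fromEdgeSet {s(u,u₁)}).edgeSet := by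
            intro e he
            have h1 : e ∈ M.edgeSet := q.edges_subset_edgeSet he
            have h2 : e ≠ s(u,u₁) := by
              rintro rfl
              exact hu (q.fst_mem_support_of_mem_edges he)
            rw [SimpleGraph.edgeSet_sdiff, SimpleGraph.edgeSet_fromEdgeSet]
            refine ⟨h1, ?_⟩
            simp only [Set.mem_diff, Set.mem_singleton_iff, Set.mem_setOf_eq, not_and]
            intro hes
            exact absurd hes h2
          exact ⟨q.transfer _ hsub⟩
    obtain ⟨pM, hpM, -⟩ := hM.existsUnique_path a' b'
    obtain ⟨x, y, hxy, hAx, hBy, -, -, hrax, hryb⟩ := cross a' b' pM hpM hAa hBb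
    -- every vertex reaches x or y in M minus e
    have reach_aux : ∀ (u w : {v : V // obs v}) (p : M.Walk u w),
        ((M \ SimpleGraph.fromEdgeSet {s(x,y)}).Reachable w x ∨
          (M \ SimpleGraph.fromEdgeSet {s(x,y)}).Reachable w y) →
        ((M \ SimpleGraph.fromEdgeSet {s(x,y)}).Reachable u x ∨
          (M \ SimpleGraph.fromEdgeSet {s(x,y)}).Reachable u y) := by
      intro u w p
      induction p with
      | nil => exact id
      | @cons u u₁ _ h q ih =>
        intro hw
        by_cases hee : s(u, u₁) = s(x,y)
        · rcases Sym2.eq_iff.mp hee with ⟨rfl, -⟩ | ⟨rfl, -⟩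
          · exact Or.inl (Reachable.refl _)
          · exact Or.inr (Reachable.refl _)
        · have hadj' : (M \ SimpleGraph.fromEdgeSet {s(x,y)}).Adj u u₁ := by
            rw [SimpleGraph.sdiff_adj]
            refine ⟨h, ?_⟩
            rw [SimpleGraph.fromEdgeSet_adj]
            rintro ⟨hmem, -⟩
            exact hee (Set.mem_singleton_iff.mp hmem)
          rcases ih hw with h1 | h1
          · exact Or.inl (hadj'.reachable.trans h1)
          · exact Or.inr (hadj'.reachable.trans h1)
    -- x–y is a bridge in M
    have hbridge : ¬ (M \ SimpleGraph.fromEdgeSet {s(x,y)}).Reachable x y := by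
      have hb := (SimpleGraph.isAcyclic_iff_forall_adj_isBridge.mp hM.IsAcyclic) hxy
      exact SimpleGraph.isBridge_iff.mp hb
    have hnreach : ¬ (M \ SimpleGraph.fromEdgeSet {s(x,y)}).Reachable a' b' := by
      intro hr
      exact hbridge (hrax.symm.trans (hr.trans hryb.symm))
    -- the exchanged graph
    set M' : SimpleGraph {v : V // obs v} :=
      (M \ SimpleGraph.fromEdgeSet {s(x,y)}) ⊔ SimpleGraph.fromEdgeSet {s(a',b')} with hM'
    have hM'adj : ∀ u w : {v : V // obs v},
        M'.Adj u w ↔ (M.Adj u w ∧ s(u,w) ≠ s(x,y)) ∨ (s(u,w) = s(a',b') ∧ u ≠ w) := by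
      intro u w
      rw [hM', SimpleGraph.sup_adj, SimpleGraph.sdiff_adj, SimpleGraph.fromEdgeSet_adj,
        SimpleGraph.fromEdgeSet_adj]
      simp only [Set.mem_singleton_iff]
      constructor
      · rintro (⟨h1, h2⟩ | ⟨h1, h2⟩)
        · exact Or.inl ⟨h1, fun hh => h2 ⟨hh, h1.ne⟩⟩
        · exact Or.inr ⟨h1, h2⟩
      · rintro (⟨h1, h2⟩ | ⟨h1, h2⟩)
        · exact Or.inl ⟨h1, fun hh => h2 hh.1⟩
        · exact Or.inr ⟨h1, h2⟩
    haveI hM'dec : DecidableRel M'.Adj := fun u w => decidable_of_iff _ (hM'adj u w).symm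
    -- M' is connected
    have hM'f : M'.Adj a' b' := (hM'adj a' b').2 (Or.inr ⟨rfl, hab'⟩)
    have hle : (M \ SimpleGraph.fromEdgeSet {s(x,y)}) ≤ M' := le_sup_left
    have hrxy' : M'.Reachable x y :=
      (hrax.symm.mono hle).trans (hM'f.reachable.trans ((hryb.mono hle).symm))
    -- every vertex reaches x or y in M minus e
    have hM'conn : M'.Connected := by
      rw [SimpleGraph.connected_iff]
      refine ⟨?_, ⟨a'⟩⟩
      have hx : ∀ z, M'.Reachable z x := by
        intro z
        obtain ⟨p⟩ := hM.isConnected.preconnected z x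
        rcases reach_aux z x p (Or.inl (Reachable.refl _)) with h1 | h1
        · exact h1.mono hle
        · exact (h1.mono hle).trans hrxy'.symm
      intro u w
      exact (hx u).trans (hx w).symm
    -- M' is acyclic
    have hM'acyc : M'.IsAcyclic := by
      intro v c hc
      by_cases hfc : s(a',b') ∈ c.edges
      · have h1 : M'.Adj a' b' ∧ (M' \ SimpleGraph.fromEdgeSet {s(a',b')}).Reachable a' b' := by
          apply (SimpleGraph.adj_and_reachable_delete_edges_iff_exists_cycle).mpr
          exact ⟨v, c, hc, hfc⟩
        have h2 : (M' \ SimpleGraph.fromEdgeSet {s(a',b')}) ≤ (M \ SimpleGraph.fromEdgeSet {s(x,y)}) := by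
          intro u w huw
          rw [SimpleGraph.sdiff_adj, SimpleGraph.fromEdgeSet_adj] at huw
          obtain ⟨h3, h4⟩ := huw
          rcases (hM'adj u w).1 h3 with ⟨h5, h6⟩ | ⟨h5, h6⟩
          · rw [SimpleGraph.sdiff_adj, SimpleGraph.fromEdgeSet_adj]
            exact ⟨h5, fun hh => h6 (Set.mem_singleton_iff.mp hh.1)⟩
          · exact absurd ⟨Set.mem_singleton_iff.mpr h5, h6⟩ h4
        exact hnreach (h1.2.mono h2)
      · have hsub : ∀ g ∈ c.edges, g ∈ M.edgeSet := by
          intro g hg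
          have hg' : g ∈ M'.edgeSet := c.edges_subset_edgeSet hg
          induction g with
          | h u w =>
            rcases (hM'adj u w).1 (M'.mem_edgeSet.mp hg') with ⟨h5, -⟩ | ⟨h5, -⟩
            · exact M.mem_edgeSet.mpr h5
            · exact absurd (h5 ▸ hg) hfc
        exact hM.IsAcyclic (c.transfer M hsub) (hc.transfer hsub)
    have hM'tree : M'.IsTree := ⟨hM'conn, hM'acyc⟩
    -- side facts
    have hxb : x ≠ b' := by
      intro hxe
      exact S1 hi hj hadj (Sg hj) (by rw [hxe] at hAx; exact hAx) hBb
    have hya : y ≠ a' := by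
      intro hye
      exact S1 hi hj hadj (Sg hi) hAa (by rw [hye] at hBy; exact hBy)
    have notab : ¬(x = a' ∧ y = b') := by
      rintro ⟨rfl, rfl⟩
      exact hnadj hxy
    -- pointwise weight identity
    have key : ∀ u w : {v : V // obs v},
        (if M'.Adj u w then dist u.1 w.1 else 0) =
        (if M.Adj u w then dist u.1 w.1 else 0)
        + (if w = b' ∧ u = a' then dist a'.1 b'.1 else 0)
        + (if w = a' ∧ u = b' then dist a'.1 b'.1 else 0)
        - (if w = y ∧ u = x then dist x.1 y.1 else 0)
        - (if w = x ∧ u = y then dist x.1 y.1 else 0) := by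
      intro u w
      by_cases c1 : w = y ∧ u = x
      · obtain ⟨rfl, rfl⟩ := c1
        have hn1 : ¬ M'.Adj u w := by
          rw [hM'adj]
          rintro (⟨-, h2⟩ | ⟨h2, -⟩)
          · exact h2 rfl
          · rcases Sym2.eq_iff.mp h2 with ⟨h3, h4⟩ | ⟨h3, h4⟩
            · exact notab ⟨h3, h4⟩
            · exact hxb h3
        rw [if_neg hn1, if_pos hxy, if_neg (fun h => notab ⟨h.2, h.1⟩),
          if_neg (fun h => hya h.1), if_pos ⟨rfl, rfl⟩,
          if_neg (fun h => hxy.ne h.2)]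
        ring
      · by_cases c2 : w = x ∧ u = y
        · obtain ⟨rfl, rfl⟩ := c2
          have hn1 : ¬ M'.Adj u w := by
            rw [hM'adj]
            rintro (⟨-, h2⟩ | ⟨h2, -⟩)
            · exact h2 Sym2.eq_swap
            · rcases Sym2.eq_iff.mp h2 with ⟨h3, h4⟩ | ⟨h3, h4⟩
              · exact hya h3
              · exact notab ⟨h4, h3⟩
          rw [if_neg hn1, if_pos hxy.symm, if_neg (fun h => hya h.2),
            if_neg (fun h => notab h), if_neg (fun h => hxy.ne h.1),
            if_pos ⟨rfl, rfl⟩, ds u.1 w.1]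
          ring
        · by_cases c3 : w = b' ∧ u = a'
          · obtain ⟨rfl, rfl⟩ := c3
            rw [if_pos hM'f, if_neg hnadj, if_pos ⟨rfl, rfl⟩,
              if_neg (fun h => hab' h.2), if_neg (fun h => notab ⟨h.2.symm, h.1.symm⟩),
              if_neg (fun h => hxb h.1.symm)]
            ring
          · by_cases c4 : w = a' ∧ u = b'
            · obtain ⟨rfl, rfl⟩ := c4
              rw [if_pos hM'f.symm, if_neg (fun h => hnadj h.symm),
                if_neg (fun h => hab' h.1), if_pos ⟨rfl, rfl⟩,
                if_neg (fun h => hya h.1.symm),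
                if_neg (fun h => notab ⟨h.1.symm, h.2.symm⟩), ds b'.1 a'.1]
              ring
            · have hiff : M'.Adj u w ↔ M.Adj u w := by
                rw [hM'adj]
                constructor
                · rintro (⟨h1, -⟩ | ⟨h1, h2⟩)
                  · exact h1
                  · rcases Sym2.eq_iff.mp h1 with ⟨rfl, rfl⟩ | ⟨rfl, rfl⟩
                    · exact absurd ⟨rfl, rfl⟩ c3
                    · exact absurd ⟨rfl, rfl⟩ c4
                · intro h1
                  refine Or.inl ⟨h1, fun h2 => ?_⟩
                  rcases Sym2.eq_iff.mp h2 with ⟨rfl, rfl⟩ | ⟨rfl, rfl⟩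
                  · exact c1 ⟨rfl, rfl⟩
                  · exact c2 ⟨rfl, rfl⟩
              rw [if_congr hiff rfl rfl, if_neg c3, if_neg c4, if_neg c1, if_neg c2]
              ring
    -- summing the identity
    have hsum : (∑ u : {v : V // obs v}, ∑ w : {v : V // obs v},
          if M'.Adj u w then dist u.1 w.1 else 0)
        = (∑ u : {v : V // obs v}, ∑ w : {v : V // obs v},
            if M.Adj u w then dist u.1 w.1 else 0)
          + 2 * dist a'.1 b'.1 - 2 * dist x.1 y.1 := by
      simp_rw [key]
      simp only [Finset.sum_add_distrib, Finset.sum_sub_distrib, ite_and,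
        Finset.sum_ite_eq', Finset.mem_univ, if_true]
      ring
    -- conclude
    have hmin := hMmin M' hM'dec hM'tree
    have hstrict : dist a'.1 b'.1 < dist x.1 y.1 := by
      refine S6 x.1 y.1 x.2 y.2 hAx hBy ?_
      rintro ⟨h1, h2⟩
      exact notab ⟨Subtype.ext h1, Subtype.ext h2⟩
    linarith
  · -- Part (ii)
    intro vj vh hobs hSgvh p hp u hu
    have hobsvj : obs vj := hSgvh ▸ hSgobs vh
    by_contra hne
    have h1 : dist u (Sg u) < dist u vj := hSg u vj hobsvj (fun h => hne h.symm)
    have h2 : dist vh vj < dist vh (Sg u) := by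
      have := hSg vh (Sg u) (hSgobs u) (by rw [hSgvh]; exact hne)
      rwa [hSgvh] at this
    have h3 : dist vh (Sg u) ≤ dist vh u + dist u (Sg u) := dtri vh u (Sg u)
    have h4 : dist vj vh = dist vj u + dist u vh :=
      dist_add_support hT dist hdist' p hp hu
    have e1 := ds vh vj
    have e2 := ds vh u
    have e3 := ds u vj
    linarith
end

section
/- In a tree-metric with additive distances, two observed nodes v_i and v_j are siblings with common parent v_l (i.e., both adjacent to v_l) if and only if the quantity Φ(v_i, v_j; v_a) := dist(v_i, v_a) - dist(v_j, v_a) is constant over all other nodes v_a and satisfies -dist(v_i,v_j) < Φ(v_i,v_j;v_a) < dist(v_i,v_j); moreover in that case Φ(v_i, v_j; v_a) = dist(v_i, v_l) - dist(v_j, v_l). -/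
open SimpleGraph

lemma second_mem_tail {V : Type*} {T : SimpleGraph V} {v b : V} (d : T.Walk v b) (hvb : v ≠ b) :
    ∃ x, T.Adj v x ∧ x ∈ d.support.tail := by
  cases d with
  | nil => exact absurd rfl hvb
  | cons h' d' => exact ⟨_, h', by simp⟩

lemma leaf_avoid {V : Type*} [Fintype V] [DecidableEq V] {T : SimpleGraph V} [DecidableRel T.Adj]
    {v p : V} (hdeg : T.degree v = 1) (hadj : T.Adj v p)
    {a b : V} (w : T.Walk a b) (hw : w.IsPath) (hva : v ≠ a) (hvb : v ≠ b) :
    v ∉ w.support := by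
  intro hv
  have huniq : ∀ q, T.Adj v q → q = p := by
    intro q hq
    exact Finset.card_le_one.mp hdeg.le q ((T.mem_neighborFinset v q).2 hq)
      p ((T.mem_neighborFinset v p).2 hadj)
  obtain ⟨x, hx, hxt⟩ := second_mem_tail (w.dropUntil v hv) hvb
  obtain ⟨y, hy, hyt⟩ := second_mem_tail (w.takeUntil v hv).reverse hva
  have hnd := hw.support_nodup
  rw [← w.take_spec hv, SimpleGraph.Walk.support_append] at hnd
  have hdisj := List.disjoint_of_nodup_append hnd
  have hyp : y ∈ (w.takeUntil v hv).support := by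
    have := List.mem_of_mem_tail hyt
    rwa [SimpleGraph.Walk.support_reverse, List.mem_reverse] at this
  rw [huniq x hx, huniq y hy] at *
  exact hdisj hyp hxt

/-- Sibling test in a tree metric with positive edge lengths: two distinct leaves
v_i, v_j have a common parent iff Φ(v_i,v_j;·) = dist(v_i,·) - dist(v_j,·) is constant
over all other nodes and lies strictly between -dist(v_i,v_j) and dist(v_i,v_j);
moreover in that case Φ(v_i,v_j;v_a) = dist(v_i,v_l) - dist(v_j,v_l). -/
theorem stmt17 {V : Type*} [Fintype V] [DecidableEq V]
    (T : SimpleGraph V) [DecidableRel T.Adj] (hT : T.IsTree)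
    (hcard : 3 ≤ Fintype.card V)
    (ℓ : V → V → ℝ) (hsymm : ∀ u v, ℓ u v = ℓ v u)
    (hpos : ∀ u v, T.Adj u v → 0 < ℓ u v)
    (dist : V → V → ℝ)
    (hdist : ∀ (u v : V) (p : T.Walk u v), p.IsPath →
      dist u v = (p.darts.map fun e => ℓ e.toProd.1 e.toProd.2).sum)
    (vi vj : V) (hij : vi ≠ vj)
    (hleafi : T.degree vi = 1) (hleafj : T.degree vj = 1) :
    ((∃ vl, T.Adj vi vl ∧ T.Adj vj vl) ↔
      ((∀ a b : V, a ≠ vi → a ≠ vj → b ≠ vi → b ≠ vj →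
          dist vi a - dist vj a = dist vi b - dist vj b) ∧
        (∀ a : V, a ≠ vi → a ≠ vj →
          -dist vi vj < dist vi a - dist vj a ∧ dist vi a - dist vj a < dist vi vj))) ∧
    (∀ vl, T.Adj vi vl → T.Adj vj vl → ∀ a : V, a ≠ vi → a ≠ vj →
      dist vi a - dist vj a = dist vi vl - dist vj vl) := by
  have hEx : ∀ u v : V, ∃ p : T.Walk u v, p.IsPath := fun u v => (hT.existsUnique_path u v).exists
  choose P hP using hEx
  -- dist u u = 0
  have hd0 : ∀ u : V, dist u u = 0 := by
    intro u
    simpa using hdist u u Walk.nil Walk.IsPath.nil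
  -- dist for adjacent
  have hdadj : ∀ u v : V, T.Adj u v → dist u v = ℓ u v := by
    intro u v h
    have hp : (Walk.cons h Walk.nil).IsPath := by
      rw [Walk.cons_isPath_iff]
      exact ⟨Walk.IsPath.nil, by simp [h.ne]⟩
    simpa using hdist u v (Walk.cons h Walk.nil) hp
  -- dist positive for distinct
  have hdpos : ∀ u v : V, u ≠ v → 0 < dist u v := by
    intro u v h
    rw [hdist u v (P u v) (hP u v)]
    apply List.sum_pos
    · intro x hx
      simp only [List.mem_map] at hx
      obtain ⟨d, _, rfl⟩ := hx
      exact hpos _ _ d.adj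
    · simp only [ne_eq, List.map_eq_nil_iff]
      intro hnil
      exact h ((P u v).eq_of_length_eq_zero (by rw [← Walk.length_darts, hnil]; rfl))
  -- leaf decomposition
  have hleaf : ∀ (v p : V), T.degree v = 1 → T.Adj v p → ∀ a, v ≠ a →
      dist v a = ℓ v p + dist p a := by
    intro v p hdeg hadj a ha
    have hvnot : v ∉ (P p a).support := leaf_avoid hdeg hadj (P p a) (hP p a) hadj.ne ha
    have hpath : (Walk.cons hadj (P p a)).IsPath := by
      rw [Walk.cons_isPath_iff]; exact ⟨hP p a, hvnot⟩
    rw [hdist v a _ hpath, hdist p a _ (hP p a)]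
    simp [Walk.darts_cons]
  -- unique neighbor
  have huniq : ∀ (v p q : V), T.degree v = 1 → T.Adj v p → T.Adj v q → p = q := by
    intro v p q hdeg hp hq
    exact Finset.card_le_one.mp hdeg.le p ((T.mem_neighborFinset v p).2 hp)
      q ((T.mem_neighborFinset v q).2 hq)
  -- existence of a third vertex
  have hthird : ∃ a : V, a ≠ vi ∧ a ≠ vj := by
    by_contra h
    push_neg at h
    have hsub : (Finset.univ : Finset V) ⊆ {vi, vj} := by
      intro a _
      rcases Classical.em (a = vi) with rfl | ha
      · simp
      · simp [h a ha]
    have := Finset.card_le_card hsub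
    have h2 : ({vi, vj} : Finset V).card ≤ 2 := Finset.card_insert_le _ _ |>.trans (by simp)
    rw [Finset.card_univ] at this
    omega
  -- the "moreover" part
  have hmore : ∀ vl, T.Adj vi vl → T.Adj vj vl → ∀ a : V, a ≠ vi → a ≠ vj →
      dist vi a - dist vj a = dist vi vl - dist vj vl := by
    intro vl h1 h2 a ha1 ha2
    have e1 : dist vi a = ℓ vi vl + dist vl a := hleaf vi vl hleafi h1 a (Ne.symm ha1)
    have e2 : dist vj a = ℓ vj vl + dist vl a := hleaf vj vl hleafj h2 a (Ne.symm ha2)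
    have e3 : dist vi vl = ℓ vi vl + dist vl vl := hleaf vi vl hleafi h1 vl h1.ne
    have e4 : dist vj vl = ℓ vj vl + dist vl vl := hleaf vj vl hleafj h2 vl h2.ne
    rw [e1, e2, e3, e4]; ring
  refine ⟨⟨fun ⟨vl, h1, h2⟩ => ?_, fun ⟨hconst, hbnd⟩ => ?_⟩, hmore⟩
  · constructor
    · intro a b ha1 ha2 hb1 hb2
      rw [hmore vl h1 h2 a ha1 ha2, hmore vl h1 h2 b hb1 hb2]
    · intro a ha1 ha2
      have e1 : dist vi a = ℓ vi vl + dist vl a := hleaf vi vl hleafi h1 a (Ne.symm ha1)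
      have e2 : dist vj a = ℓ vj vl + dist vl a := hleaf vj vl hleafj h2 a (Ne.symm ha2)
      have e3 : dist vi vj = ℓ vi vl + dist vl vj := hleaf vi vl hleafi h1 vj hij
      have e4 : dist vl vj = ℓ vj vl := by rw [hdadj vl vj h2.symm, hsymm]
      have p1 : 0 < ℓ vi vl := hpos _ _ h1
      have p2 : 0 < ℓ vj vl := hpos _ _ h2
      constructor <;> [skip; skip] <;> (rw [e1, e2, e3, e4]; linarith)
  · -- backward direction
    obtain ⟨pi, hpimem⟩ := Finset.card_eq_one.mp hleafi
    obtain ⟨pj, hpjmem⟩ := Finset.card_eq_one.mp hleafj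
    have hpi : T.Adj vi pi := (T.mem_neighborFinset vi pi).1 (by rw [hpimem]; simp)
    have hpj : T.Adj vj pj := (T.mem_neighborFinset vj pj).1 (by rw [hpjmem]; simp)
    obtain ⟨a, ha1, ha2⟩ := hthird
    -- pi ≠ vj
    have hpi_ne : pi ≠ vj := by
      intro h
      have hadjij : T.Adj vi vj := h ▸ hpi
      have e1 : dist vi a = ℓ vi vj + dist vj a := hleaf vi vj hleafi hadjij a (Ne.symm ha1)
      have e2 : dist vi vj = ℓ vi vj := hdadj vi vj hadjij
      have := (hbnd a ha1 ha2).2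
      rw [e1, e2] at this
      linarith
    have hpj_ne : pj ≠ vi := by
      intro h
      have hadjji : T.Adj vj vi := h ▸ hpj
      have e1 : dist vj a = ℓ vj vi + dist vi a := hleaf vj vi hleafj hadjji a (Ne.symm ha2)
      have e2 : dist vi vj = ℓ vi vj := hdadj vi vj hadjji.symm
      have := (hbnd a ha1 ha2).1
      rw [e1, e2, hsymm vj vi] at this
      linarith
    have hpipj : pi = pj := by
      by_contra hne
      have hc := hconst pi pj hpi.ne' hpi_ne hpj_ne hpj.ne'
      have e1 : dist vi pi = ℓ vi pi := hdadj vi pi hpi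
      have e2 : dist vj pi = ℓ vj pj + dist pj pi := hleaf vj pj hleafj hpj pi (fun h => hpi_ne h.symm)
      have e3 : dist vi pj = ℓ vi pi + dist pi pj := hleaf vi pi hleafi hpi pj (fun h => hpj_ne h.symm)
      have e4 : dist vj pj = ℓ vj pj := hdadj vj pj hpj
      have q1 : 0 < dist pi pj := hdpos pi pj hne
      have q2 : 0 < dist pj pi := hdpos pj pi (Ne.symm hne)
      rw [e1, e2, e3, e4] at hc
      linarith
    exact ⟨pi, hpi, hpipj ▸ hpj⟩
end
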